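/- arXiv:2207.06508 — 8 statements merged into one kernel-verified Lean document; each statement's English description precedes it below -/
import Mathlib

section
/- Let v be a k-Grassmannian permutation in S_n (i.e., v(1) < ... < v(k) and v(k+1) < ... < v(n)). Then for any u in S_n, u ≤ v in Bruhat order if and only if u(j) ≤ v(j) for all 1 ≤ j ≤ k and u(m) ≥ v(m) for all k < m ≤ n. -/
/-!
Two sets of the same size are Gale-comparable, `I ≤ J`, iff for every threshold `t` the set `J`
has at most as many elements `≤ t` as `I`. Hence `u ≤ v` says that every prefix of positions is
sent by `u` to at least as many values `≤ t` as by `v`; as `u` and `v` are bijections, this is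
the same as saying that every suffix is sent by `v` to at least as many values `≤ t` as by `u`.

For `j < k`, all of `v(0), …, v(j)` are `≤ v(j)`, so the prefix ending at `j` with threshold
`v(j)` forces `u(j) ≤ v(j)`. For `m ≥ k`, none of `v(m), v(m+1), …` lies below `v(m)`, so the
suffix starting at `m` with threshold `u(m)` forces `v(m) ≤ u(m)`. Conversely, `u(j) ≤ v(j)`
for `j < k` gives the prefix counts for prefixes within the first `k` positions, and
`v(m) ≤ u(m)` for `m ≥ k` gives the suffix counts for suffixes within the remaining positions;
every prefix is of the first kind or has a complementary suffix of the second kind.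
-/

/-- Gale (dominance) order on finsets of `Fin n`: componentwise comparison
of the increasingly sorted lists. -/
def galeList {n : ℕ} (I J : Finset (Fin n)) : Prop :=
  List.Forall₂ (· ≤ ·) (I.sort (· ≤ ·)) (J.sort (· ≤ ·))

/-- Bruhat order on permutations of `Fin n`, via the tableau criterion:
`u ≤ v` iff every initial set of `u` is dominated by the corresponding
initial set of `v` in Gale order. -/
def bruhatLE {n : ℕ} (u v : Equiv.Perm (Fin n)) : Prop :=
  ∀ i : Fin n, galeList ((Finset.Iic i).image u) ((Finset.Iic i).image v)

/-- `v` is `k`-Grassmannian: increasing on the first `k` positions and on the rest. -/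
def IsGrassmannian {n : ℕ} (k : ℕ) (v : Equiv.Perm (Fin n)) : Prop :=
  (∀ i j : Fin n, i < j → (j : ℕ) < k → v i < v j) ∧
  (∀ i j : Fin n, i < j → k ≤ (i : ℕ) → v i < v j)

namespace List

variable {α : Type*} [LinearOrder α]

theorem Forall₂.countP_le {a b : List α} (h : Forall₂ (· ≤ ·) a b) (t : α) :
    b.countP (· ≤ t) ≤ a.countP (· ≤ t) := by
  induction h with
  | nil => rfl
  | @cons x y a b hxy _ ih =>
    simp only [countP_cons, decide_eq_true_eq]
    by_cases hy : y ≤ t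
    · simp [hy, hxy.trans hy, ih]
    · split_ifs <;> omega

theorem forall₂_le_of_countP_le : ∀ {a b : List α}, a.Pairwise (· ≤ ·) → b.Pairwise (· ≤ ·) →
    a.length = b.length → (∀ t, b.countP (· ≤ t) ≤ a.countP (· ≤ t)) → Forall₂ (· ≤ ·) a b
  | [], [], _, _, _, _ => .nil
  | x :: a, y :: b, ha, hb, hlen, hcount => by
    rw [pairwise_cons] at ha hb
    have hxy : x ≤ y := by
      by_contra! hyx
      have hx : (x :: a).countP (· ≤ y) = 0 :=
        countP_eq_zero.mpr fun z hz => by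
          rcases mem_cons.mp hz with rfl | hz
          · simpa using hyx
          · simpa using hyx.trans_le (ha.1 z hz)
      simpa [hx] using hcount y
    refine .cons hxy (forall₂_le_of_countP_le ha.2 hb.2 (by simpa using hlen) fun t => ?_)
    by_cases hy : y ≤ t
    · simpa [countP_cons, hy, hxy.trans hy] using hcount t
    · have hb' : b.countP (· ≤ t) = 0 :=
        countP_eq_zero.mpr fun z hz => by simpa using (not_le.mp hy).trans_le (hb.1 z hz)
      simp [hb']

theorem forall₂_le_iff_countP_le {a b : List α} (ha : a.Pairwise (· ≤ ·))
    (hb : b.Pairwise (· ≤ ·)) :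
    Forall₂ (· ≤ ·) a b ↔ a.length = b.length ∧ ∀ t, b.countP (· ≤ t) ≤ a.countP (· ≤ t) :=
  ⟨fun h => ⟨h.length_eq, h.countP_le⟩, fun h => forall₂_le_of_countP_le ha hb h.1 h.2⟩

end List

open Finset

namespace Finset

theorem countP_sort {α : Type*} [LinearOrder α] (s : Finset α) (p : α → Prop) [DecidablePred p] :
    (s.sort (· ≤ ·)).countP p = #{x ∈ s | p x} := by
  rw [← Multiset.coe_countP, sort_eq, Multiset.countP_eq_card_filter]; rfl

section Fintype

variable {α : Type*} [Fintype α]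

theorem card_filter_perm (σ : Equiv.Perm α) (p : α → Prop) [DecidablePred p] :
    #{x | p (σ x)} = #{x | p x} :=
  card_equiv σ (by simp)

variable [DecidableEq α]

theorem card_filter_add_card_filter_compl (s : Finset α) (p : α → Prop) [DecidablePred p] :
    #{x ∈ s | p x} + #{x ∈ sᶜ | p x} = #{x | p x} := by
  rw [← card_union_of_disjoint (disjoint_filter_filter disjoint_compl_right), ← filter_union,
    union_compl]

theorem card_filter_perm_le_iff_compl (σ τ : Equiv.Perm α) (s : Finset α) (p : α → Prop)
    [DecidablePred p] :
    #{x ∈ s | p (σ x)} ≤ #{x ∈ s | p (τ x)} ↔ #{x ∈ sᶜ | p (τ x)} ≤ #{x ∈ sᶜ | p (σ x)} := by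
  have hσ := card_filter_add_card_filter_compl s (p ∘ σ)
  have hτ := card_filter_add_card_filter_compl s (p ∘ τ)
  simp only [Function.comp, card_filter_perm] at hσ hτ
  omega

end Fintype

section

variable {ι α : Type*} [LinearOrder α] {s : Finset ι} {f g : ι → α} {j : ι}

theorem apply_le_of_forall_card_filter_le (hj : j ∈ s) (hmax : ∀ p ∈ s, g p ≤ g j)
    (h : ∀ t, #{p ∈ s | g p ≤ t} ≤ #{p ∈ s | f p ≤ t}) : f j ≤ g j := by
  have hg : {p ∈ s | g p ≤ g j} = s := filter_true_of_mem hmax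
  have hcard := h (g j)
  rw [hg] at hcard
  rw [← eq_of_subset_of_card_le (filter_subset _ _) hcard] at hj
  exact (mem_filter.1 hj).2

theorem le_apply_of_forall_card_filter_le (hj : j ∈ s) (hmin : ∀ p ∈ s, g j ≤ g p)
    (h : ∀ t, #{p ∈ s | f p ≤ t} ≤ #{p ∈ s | g p ≤ t}) : g j ≤ f j := by
  by_contra! hfg
  have hg : {p ∈ s | g p ≤ f j} = ∅ :=
    filter_false_of_mem fun p hp => not_le.2 (hfg.trans_le (hmin p hp))
  have hf : j ∈ {p ∈ s | f p ≤ f j} := mem_filter.2 ⟨hj, le_rfl⟩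
  have hcard := h (f j)
  rw [hg, card_empty, Nat.le_zero, card_eq_zero] at hcard
  exact notMem_empty j (hcard ▸ hf)

end

end Finset

theorem galeList_iff {n : ℕ} {I J : Finset (Fin n)} :
    galeList I J ↔ #I = #J ∧ ∀ t, #{x ∈ J | x ≤ t} ≤ #{x ∈ I | x ≤ t} := by
  simp only [galeList, List.forall₂_le_iff_countP_le (I.pairwise_sort _) (J.pairwise_sort _),
    length_sort, countP_sort]

section Bruhat

variable {n : ℕ} {u v : Equiv.Perm (Fin n)}

theorem bruhatLE_iff :
    bruhatLE u v ↔ ∀ i t : Fin n, #{p ∈ Iic i | v p ≤ t} ≤ #{p ∈ Iic i | u p ≤ t} := by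
  simp only [bruhatLE, galeList_iff, card_image_of_injective _ u.injective,
    card_image_of_injective _ v.injective, filter_image, true_and]

theorem bruhatLE.card_filter_Ici_le (h : bruhatLE u v) (m t : Fin n) :
    #{p ∈ Ici m | u p ≤ t} ≤ #{p ∈ Ici m | v p ≤ t} := by
  have hcompl : (Iio m)ᶜ = Ici m := by ext; simp
  rw [← hcompl]
  refine (card_filter_perm_le_iff_compl v u (Iio m) (· ≤ t)).1 ?_
  by_cases hm : IsMin m
  · simp [Iio_eq_empty.2 hm]
  · rw [← Iic_pred_eq_Iio_of_not_isMin hm]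
    exact bruhatLE_iff.1 h _ t

end Bruhat

namespace IsGrassmannian

variable {n k : ℕ} {v : Equiv.Perm (Fin n)}

theorem strictMonoOn_lt (hv : IsGrassmannian k v) : StrictMonoOn v {p | (p : ℕ) < k} :=
  fun p _ q hq hpq => hv.1 p q hpq hq

theorem strictMonoOn_ge (hv : IsGrassmannian k v) : StrictMonoOn v {p | k ≤ (p : ℕ)} :=
  fun p hp q _ hpq => hv.2 p q hpq hp

end IsGrassmannian

/-- Bergeron–Sottile criterion: for `v` a `k`-Grassmannian permutation,
`u ≤ v` in Bruhat order iff `u(j) ≤ v(j)` for positions `j` among the first `k`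
and `u(m) ≥ v(m)` for the remaining positions `m`. -/
theorem stmt0 {n k : ℕ} (v : Equiv.Perm (Fin n)) (hv : IsGrassmannian k v)
    (u : Equiv.Perm (Fin n)) :
    bruhatLE u v ↔
      ((∀ j : Fin n, (j : ℕ) < k → u j ≤ v j) ∧
       (∀ m : Fin n, k ≤ (m : ℕ) → v m ≤ u m)) := by
  constructor
  · intro h
    refine ⟨fun j hj => ?_, fun m hm => ?_⟩
    · have hmax : ∀ p ∈ Iic j, v p ≤ v j := fun p hp =>
        hv.strictMonoOn_lt.monotoneOn (Fin.le_def.1 (mem_Iic.1 hp) |>.trans_lt hj) hj (mem_Iic.1 hp)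
      exact apply_le_of_forall_card_filter_le (mem_Iic.2 le_rfl) hmax (bruhatLE_iff.1 h j)
    · have hmin : ∀ p ∈ Ici m, v m ≤ v p := fun p hp =>
        hv.strictMonoOn_ge.monotoneOn hm (hm.trans (Fin.le_def.1 (mem_Ici.1 hp))) (mem_Ici.1 hp)
      exact le_apply_of_forall_card_filter_le (mem_Ici.2 le_rfl) hmin (h.card_filter_Ici_le m)
  · rintro ⟨hinit, htail⟩
    refine bruhatLE_iff.2 fun i t => ?_
    by_cases hi : (i : ℕ) < k
    · refine card_le_card fun p => ?_
      simp only [mem_filter, mem_Iic]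
      exact fun ⟨hpi, hvp⟩ => ⟨hpi, (hinit p (by omega)).trans hvp⟩
    · refine (card_filter_perm_le_iff_compl v u (Iic i) (· ≤ t)).2 (card_le_card fun p => ?_)
      simp only [mem_filter, mem_compl, mem_Iic, not_le]
      exact fun ⟨hip, hup⟩ => ⟨hip, (htail p (by omega)).trans hup⟩
end

section
/- Let v ∈ S_n be k-Grassmannian and u ≤ v in Bruhat order. Then there exists a unique permutation u' ∈ [u,v] that is maximal in Bruhat order among all permutations y ∈ [u,v] with (y(1),...,y(k)) = (u(1),...,u(k)) as an ordered list. -/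
/-! Bruhat order is tested by rank counts: `y ≤ w` iff for every initial segment of positions
`[0, j]` and every threshold `t`, `y` takes at most as many values `≥ t` there as `w` does.

Fix the first `k` values. At a position `i ≥ k`, given the prefix before `i`, there is a largest
value `c` that the rank conditions of `v` at column `i` still allow (the greedy value). Any `y ≤ v`
with `y i < c` can be raised by the transposition `(i q)`, where `q` is the first position after
`i` with `y i < y q ≤ c`, and stays below `v`: a tight rank condition between `i` and `q` would
force `v`, which is increasing after `k`, and then `y` above `c` on every position after it,
including `q`. Iterating, `y` is raised until it takes the value `c` at `i`. Hence a
Bruhat-maximal `z` among the `y ≤ v` with the prescribed first `k` values is greedy at every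
free position, and raising any other such `y` position by position until it agrees with `z` shows
that it lies below `z`. -/

open Finset Equiv

namespace Finset

variable {α : Type*} [LinearOrder α] {m : ℕ}

lemma card_filter_le_eq_card_filter_orderEmbOfFin (s : Finset α) (h : #s = m) (t : α) :
    #{x ∈ s | t ≤ x} = #{a | t ≤ s.orderEmbOfFin h a} := by
  conv_lhs => rw [← s.map_orderEmbOfFin_univ h]
  rw [filter_map, card_map]
  rfl

lemma le_orderEmbOfFin_iff (s : Finset α) (h : #s = m) (a : Fin m) (t : α) :
    t ≤ s.orderEmbOfFin h a ↔ m - a ≤ #{x ∈ s | t ≤ x} := by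
  rw [card_filter_le_eq_card_filter_orderEmbOfFin s h]
  constructor
  · intro ht
    calc m - (a : ℕ) = #(Ici a) := (Fin.card_Ici a).symm
      _ ≤ _ := card_le_card fun b hb => by
        simpa using ht.trans ((s.orderEmbOfFin h).monotone (mem_Ici.1 hb))
  · intro hcard
    by_contra! hlt
    have hsub : ({b | t ≤ s.orderEmbOfFin h b} : Finset (Fin m)) ⊆ Ioi a := fun b hb => by
      simp only [mem_filter, mem_univ, true_and] at hb
      exact mem_Ioi.2 ((s.orderEmbOfFin h).lt_iff_lt.1 (hlt.trans_le hb))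
    have := (card_le_card hsub).trans' hcard
    rw [Fin.card_Ioi] at this
    omega

lemma forall₂_sort_le_iff_card_filter_le {I J : Finset α} (hIJ : #I = #J) :
    List.Forall₂ (· ≤ ·) (I.sort (· ≤ ·)) (J.sort (· ≤ ·)) ↔
      ∀ t, #{x ∈ I | t ≤ x} ≤ #{x ∈ J | t ≤ x} := by
  have hsort : List.Forall₂ (· ≤ ·) (I.sort (· ≤ ·)) (J.sort (· ≤ ·)) ↔
      ∀ a, I.orderEmbOfFin hIJ a ≤ J.orderEmbOfFin rfl a := by
    simp only [List.forall₂_iff_get, length_sort, hIJ, orderEmbOfFin_apply, true_and]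
    exact ⟨fun h a => h a a.2 a.2, fun h i h₁ _ => h ⟨i, h₁⟩⟩
  rw [hsort]
  constructor
  · intro hle t
    rw [card_filter_le_eq_card_filter_orderEmbOfFin I hIJ,
      card_filter_le_eq_card_filter_orderEmbOfFin J rfl]
    exact card_le_card fun a => by simpa using fun ha => ha.trans (hle a)
  · intro hcard a
    rw [le_orderEmbOfFin_iff]
    exact ((le_orderEmbOfFin_iff I hIJ a _).1 le_rfl).trans (hcard _)

end Finset

lemma galeList_iff_card_filter_le {n : ℕ} {I J : Finset (Fin n)} (hIJ : #I = #J) :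
    galeList I J ↔ ∀ t : ℕ, #{x ∈ I | t ≤ x.val} ≤ #{x ∈ J | t ≤ x.val} := by
  rw [galeList, forall₂_sort_le_iff_card_filter_le hIJ]
  refine ⟨fun h t => ?_, fun h t => h t⟩
  by_cases htn : t < n
  · simpa [Fin.le_def] using h ⟨t, htn⟩
  · rw [filter_false_of_mem fun x _ => by omega]
    exact Nat.zero_le _

section RankCount

variable {n : ℕ}

def rankCount (w : Perm (Fin n)) (s : Finset (Fin n)) (t : ℕ) : ℕ :=
  #{r ∈ s | t ≤ (w r : ℕ)}

variable (w : Perm (Fin n)) (s : Finset (Fin n)) (t : ℕ)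

lemma rankCount_eq_card_filter_image : rankCount w s t = #{x ∈ s.image w | t ≤ x.val} := by
  rw [filter_image, card_image_of_injective _ w.injective]
  rfl

lemma rankCount_univ : rankCount w univ t = #{x : Fin n | t ≤ x.val} := by
  rw [rankCount_eq_card_filter_image, image_univ_equiv]

lemma rankCount_zero : rankCount w s 0 = #s := by
  simp [rankCount]

lemma rankCount_insert {a : Fin n} (ha : a ∉ s) :
    rankCount w (insert a s) t = rankCount w s t + if t ≤ (w a : ℕ) then 1 else 0 := by
  unfold rankCount
  rw [filter_insert]
  split_ifs
  · rw [card_insert_of_notMem (by simp [ha])]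
  · rfl

lemma rankCount_union {s'} (h : Disjoint s s') :
    rankCount w (s ∪ s') t = rankCount w s t + rankCount w s' t := by
  rw [rankCount, filter_union, card_union_of_disjoint (disjoint_filter_filter h)]
  rfl

lemma rankCount_Iic (i : Fin n) :
    rankCount w (Iic i) t = rankCount w (Iio i) t + if t ≤ (w i : ℕ) then 1 else 0 := by
  rw [← Iio_insert, rankCount_insert _ _ _ (by simp)]

lemma rankCount_Iic_of_le {i j : Fin n} (hij : i ≤ j) :
    rankCount w (Iic j) t = rankCount w (Iic i) t + rankCount w (Ioc i j) t := by
  rw [← Iic_union_Ioc_eq_Iic hij, rankCount_union _ _ _ (Iic_disjoint_Ioc le_rfl)]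

lemma rankCount_Iic_add_Ioi (j : Fin n) :
    rankCount w (Iic j) t + rankCount w (Ioi j) t = #{x : Fin n | t ≤ x.val} := by
  rw [← rankCount_union, ← rankCount_univ w]
  · congr 1
    ext r
    simpa using le_or_gt r j
  · exact disjoint_left.2 fun r h₁ h₂ => (mem_Ioi.1 h₂).not_ge (mem_Iic.1 h₁)

variable {s t}

lemma rankCount_mono {s'} (h : s ⊆ s') : rankCount w s t ≤ rankCount w s' t :=
  card_le_card (filter_subset_filter _ h)

lemma rankCount_congr {y : Perm (Fin n)} (h : ∀ r ∈ s, y r = w r) :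
    rankCount y s t = rankCount w s t := by
  unfold rankCount
  congr 1
  exact filter_congr fun r hr => by rw [h r hr]

lemma rankCount_le_rankCount_succ_add_one : rankCount w s t ≤ rankCount w s (t + 1) + 1 := by
  have hsub : ({r ∈ s | t ≤ (w r : ℕ)} : Finset (Fin n)) ⊆
      {r ∈ s | t + 1 ≤ (w r : ℕ)} ∪ ({r | (w r : ℕ) = t} : Finset (Fin n)) := fun r hr => by
    simp only [mem_filter, mem_union, mem_univ, true_and] at hr ⊢
    exact hr.2.eq_or_lt.elim (fun h => Or.inr h.symm) fun h => Or.inl ⟨hr.1, h⟩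
  have hone : #({r | (w r : ℕ) = t} : Finset (Fin n)) ≤ 1 :=
    card_le_one.2 fun a ha b hb => w.injective (Fin.ext (by simp_all))
  exact (card_le_card hsub).trans ((card_union_le _ _).trans (by unfold rankCount; omega))

lemma rankCount_succ_lt {r : Fin n} (hr : r ∈ s) (h : (w r : ℕ) = t) :
    rankCount w s (t + 1) < rankCount w s t := by
  refine card_lt_card ⟨monotone_filter_right _ fun x hx => by omega, fun hsub => ?_⟩
  have := (mem_filter.1 (hsub (mem_filter.2 ⟨hr, h.ge⟩))).2
  omega

lemma rankCount_mul (σ : Perm (Fin n)) :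
    rankCount (w * σ) s t = rankCount w (s.map σ.toEmbedding) t := by
  rw [rankCount, rankCount, filter_map, card_map]
  rfl

variable {i q : Fin n}

lemma rankCount_mul_swap_of_mem (hi : i ∈ s) (hq : q ∈ s) :
    rankCount (w * swap i q) s t = rankCount w s t := by
  rw [rankCount_mul]
  congr 1
  ext x
  rw [mem_map_equiv, symm_swap, swap_apply_def]
  split_ifs <;> simp_all

lemma rankCount_mul_swap_of_notMem (hi : i ∉ s) (hq : q ∉ s) :
    rankCount (w * swap i q) s t = rankCount w s t := by
  rw [rankCount_mul]
  congr 1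
  ext x
  rw [mem_map_equiv, symm_swap, swap_apply_def]
  split_ifs <;> simp_all

lemma rankCount_mul_swap_add (hi : i ∈ s) (hq : q ∉ s) :
    rankCount (w * swap i q) s t + (if t ≤ (w i : ℕ) then 1 else 0) =
      rankCount w s t + if t ≤ (w q : ℕ) then 1 else 0 := by
  have hmap : s.map (swap i q).toEmbedding = insert q (s.erase i) := by
    ext x
    rw [mem_map_equiv, symm_swap, swap_apply_def]
    split_ifs <;> simp_all [ne_of_mem_of_not_mem hi hq]
  conv_rhs => rw [← insert_erase hi, rankCount_insert _ _ _ (notMem_erase i s)]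
  rw [rankCount_mul, hmap, rankCount_insert _ _ _ (fun h => hq (mem_of_mem_erase h))]
  omega

end RankCount

section Bruhat

variable {n : ℕ} {y w z : Perm (Fin n)}

lemma bruhatLE_iff_rankCount_le :
    bruhatLE y w ↔ ∀ j t, rankCount y (Iic j) t ≤ rankCount w (Iic j) t := by
  have hcard (x : Perm (Fin n)) (j : Fin n) : #((Iic j).image x) = #(Iic j) :=
    card_image_of_injective _ x.injective
  refine forall_congr' fun j => ?_
  rw [galeList_iff_card_filter_le ((hcard y j).trans (hcard w j).symm)]
  simp only [rankCount_eq_card_filter_image]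

lemma bruhatLE_refl (y : Perm (Fin n)) : bruhatLE y y :=
  bruhatLE_iff_rankCount_le.2 fun _ _ => le_rfl

lemma bruhatLE.trans (h₁ : bruhatLE y w) (h₂ : bruhatLE w z) : bruhatLE y z :=
  bruhatLE_iff_rankCount_le.2 fun j t =>
    (bruhatLE_iff_rankCount_le.1 h₁ j t).trans (bruhatLE_iff_rankCount_le.1 h₂ j t)

lemma eq_of_rankCount_Iic_eq (h : ∀ j t, rankCount y (Iic j) t = rankCount w (Iic j) t) :
    y = w := by
  ext1 j
  induction j using WellFoundedLT.induction with
  | _ j ih =>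
    have hprefix (t : ℕ) : rankCount y (Iio j) t = rankCount w (Iio j) t :=
      rankCount_congr w fun r hr => ih r (mem_Iio.1 hr)
    have hval (t : ℕ) : t ≤ (y j : ℕ) ↔ t ≤ (w j : ℕ) := by
      have := h j t
      rw [rankCount_Iic, rankCount_Iic, hprefix] at this
      split_ifs at this <;> omega
    exact Fin.ext (le_antisymm ((hval _).1 le_rfl) ((hval _).2 le_rfl))

lemma bruhatLE_antisymm (h₁ : bruhatLE y w) (h₂ : bruhatLE w y) : y = w :=
  eq_of_rankCount_Iic_eq fun j t =>
    (bruhatLE_iff_rankCount_le.1 h₁ j t).antisymm (bruhatLE_iff_rankCount_le.1 h₂ j t)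

lemma exists_maximal_bruhatLE {T : Finset (Perm (Fin n))} (hT : T.Nonempty) :
    ∃ z ∈ T, ∀ y ∈ T, bruhatLE z y → y = z := by
  let _ : LE (Perm (Fin n)) := ⟨bruhatLE⟩
  have : IsTrans (Perm (Fin n)) (· ≤ ·) := ⟨fun _ _ _ => bruhatLE.trans⟩
  obtain ⟨z, hzT, hzmax⟩ := exists_maximal hT
  exact ⟨z, hzT, fun y hyT hzy => bruhatLE_antisymm (hzmax hyT hzy) hzy⟩

lemma bruhatLE_mul_swap {i q : Fin n} (hiq : i < q) (h : y i < y q) :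
    bruhatLE y (y * swap i q) := by
  refine bruhatLE_iff_rankCount_le.2 fun j t => ?_
  rcases lt_or_ge j i with hji | hij
  · rw [rankCount_mul_swap_of_notMem _ (by simpa using hji) (by simpa using hji.trans hiq)]
  rcases lt_or_ge j q with hjq | hqj
  · have hswap := rankCount_mul_swap_add y (mem_Iic.2 hij) (by simpa using hjq) (t := t)
    have h' : (y i : ℕ) < y q := h
    split_ifs at hswap <;> omega
  · rw [rankCount_mul_swap_of_mem _ (mem_Iic.2 (hiq.le.trans hqj)) (mem_Iic.2 hqj)]

end Bruhat

section Greedy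

variable {n : ℕ} {v y : Perm (Fin n)} {i c : Fin n}

/-- `c` is the largest value that may follow the prefix `y 0, …, y (i - 1)` at position `i`
without violating the rank conditions of `v` at column `i`: every threshold `t ≤ c` still has
room there, the threshold `c + 1` has none. -/
def IsGreedyValue (v y : Perm (Fin n)) (i c : Fin n) : Prop :=
  (∀ t ≤ (c : ℕ), rankCount y (Iio i) t < rankCount v (Iic i) t) ∧
    rankCount v (Iic i) (c + 1) ≤ rankCount y (Iio i) (c + 1)

lemma exists_isGreedyValue (v y : Perm (Fin n)) (i : Fin n) : ∃ c, IsGreedyValue v y i c := by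
  classical
  have hn : rankCount v (Iic i) n ≤ rankCount y (Iio i) n := by
    rw [rankCount, filter_false_of_mem fun r _ => by omega]
    exact Nat.zero_le _
  have hex : ∃ τ, rankCount v (Iic i) τ ≤ rankCount y (Iio i) τ := ⟨n, hn⟩
  have hτ0 : Nat.find hex ≠ 0 := fun h0 => by
    have := Nat.find_spec hex
    rw [h0, rankCount_zero, rankCount_zero, Fin.card_Iic, Fin.card_Iio] at this
    omega
  have hτn : Nat.find hex ≤ n := Nat.find_min' hex hn
  refine ⟨⟨Nat.find hex - 1, by omega⟩, fun t ht => not_le.1 (Nat.find_min hex ?_), ?_⟩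
  · simp only at ht
    omega
  · simpa [Nat.sub_add_cancel (Nat.pos_of_ne_zero hτ0)] using Nat.find_spec hex

lemma IsGreedyValue.congr {y' : Perm (Fin n)} (hc : IsGreedyValue v y i c)
    (hy : ∀ r < i, y' r = y r) : IsGreedyValue v y' i c := by
  have hprefix (t : ℕ) : rankCount y' (Iio i) t = rankCount y (Iio i) t :=
    rankCount_congr y fun r hr => hy r (mem_Iio.1 hr)
  simpa only [IsGreedyValue, hprefix] using hc

lemma IsGreedyValue.apply_le (hc : IsGreedyValue v y i c) (hy : bruhatLE y v) : y i ≤ c := by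
  by_contra! hci
  have := bruhatLE_iff_rankCount_le.1 hy i (c + 1)
  rw [rankCount_Iic y, if_pos (Nat.succ_le_of_lt hci)] at this
  exact absurd hc.2 (by omega)

lemma IsGreedyValue.apply_ne (hc : IsGreedyValue v y i c) {r : Fin n} (hr : r < i) : y r ≠ c :=
  fun hrc => lt_irrefl (rankCount y (Iio i) c) <| calc
    rankCount y (Iio i) c < rankCount v (Iic i) c := hc.1 c le_rfl
    _ ≤ rankCount v (Iic i) (c + 1) + 1 := rankCount_le_rankCount_succ_add_one v
    _ ≤ rankCount y (Iio i) (c + 1) + 1 := Nat.add_le_add_right hc.2 1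
    _ ≤ rankCount y (Iio i) c := rankCount_succ_lt y (mem_Iio.2 hr) (congrArg Fin.val hrc)

lemma bruhatLE.le_apply_of_lt (hy : bruhatLE y v) {j q : Fin n} {τ : ℕ}
    (hv : ∀ r, j < r → τ ≤ (v r : ℕ)) (hjq : j < q) : τ ≤ (y q : ℕ) := by
  have hvtail : rankCount v (Ioi j) τ = #(Ioi j) :=
    congrArg card (filter_true_of_mem fun r hr => hv r (mem_Ioi.1 hr))
  have hytotal := rankCount_Iic_add_Ioi y τ j
  have hvtotal := rankCount_Iic_add_Ioi v τ j
  have hyv := bruhatLE_iff_rankCount_le.1 hy j τ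
  have hytail : rankCount y (Ioi j) τ = #(Ioi j) :=
    le_antisymm (card_filter_le _ _) (by omega)
  exact filter_card_eq hytail q (mem_Ioi.2 hjq)

lemma IsGreedyValue.rankCount_lt (hc : IsGreedyValue v y i c)
    (hv : ∀ a b : Fin n, a < b → i ≤ a → v a < v b) (hy : bruhatLE y v) {j q : Fin n}
    (hij : i ≤ j) (hjq : j < q) (hqc : y q ≤ c) (hgap : ∀ r ∈ Ioc i j, y r ≤ c → y r ≤ y i)
    {t : ℕ} (hit : (y i : ℕ) < t) (htc : t ≤ c) :
    rankCount y (Iic j) t < rankCount v (Iic j) t := by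
  by_contra! htight
  have hyIic (τ : ℕ) (hτ : (y i : ℕ) < τ) :
      rankCount y (Iic j) τ = rankCount y (Iio i) τ + rankCount y (Ioc i j) τ := by
    rw [rankCount_Iic_of_le y τ hij, rankCount_Iic, if_neg (by omega), add_zero]
  have hmid : rankCount y (Ioc i j) t = rankCount y (Ioc i j) (c + 1) := by
    unfold rankCount
    congr 1
    refine filter_congr fun r hr => ⟨fun htr => ?_, fun h => by omega⟩
    by_contra! hrc
    have := hgap r hr (Fin.le_def.2 (by omega))
    rw [Fin.le_def] at this
    omega
  -- tightness at `(j, t)` forces a position of `(i, j]` where `y`, hence `v`, exceeds `c`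
  have hypos : 0 < rankCount y (Ioc i j) (c + 1) := by
    have := (hc.1 t htc).trans_le ((rankCount_mono v (Iic_subset_Iic.2 hij)).trans htight)
    rw [hyIic t hit, hmid] at this
    omega
  have hyv : rankCount y (Ioc i j) (c + 1) ≤ rankCount v (Ioc i j) (c + 1) := by
    have := bruhatLE_iff_rankCount_le.1 hy j (c + 1)
    rw [hyIic (c + 1) (by omega), rankCount_Iic_of_le v _ hij] at this
    have := hc.2
    omega
  obtain ⟨r₀, hr₀⟩ := card_pos.1 (hypos.trans_le hyv)
  rw [mem_filter, mem_Ioc] at hr₀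
  have hfar (r : Fin n) (hr : j < r) : c + 1 ≤ (v r : ℕ) :=
    hr₀.2.trans (Fin.val_le_of_le (hv r₀ r (hr₀.1.2.trans_lt hr) hr₀.1.1.le).le)
  have := hy.le_apply_of_lt hfar hjq
  rw [Fin.le_def] at hqc
  omega

lemma IsGreedyValue.exists_swap (hc : IsGreedyValue v y i c)
    (hv : ∀ a b : Fin n, a < b → i ≤ a → v a < v b) (hy : bruhatLE y v) (hlt : y i < c) :
    ∃ q, i < q ∧ y i < y q ∧ y q ≤ c ∧ bruhatLE (y * swap i q) v := by
  classical
  set Q : Finset (Fin n) := {r | i < r ∧ y i < y r ∧ y r ≤ c}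
  have hQ : Q.Nonempty := by
    refine ⟨y.symm c, mem_filter.2 ⟨mem_univ _, ?_, by simpa using hlt, by simp⟩⟩
    refine lt_of_le_of_ne (not_lt.1 fun h => hc.apply_ne h (by simp)) fun h => hlt.ne ?_
    rw [h, apply_symm_apply]
  obtain ⟨hiq, hiy, hqc⟩ : i < Q.min' hQ ∧ y i < y (Q.min' hQ) ∧ y (Q.min' hQ) ≤ c := by
    simpa [Q] using Q.min'_mem hQ
  set q := Q.min' hQ
  have hgap (j : Fin n) (hjq : j < q) (r : Fin n) (hr : r ∈ Ioc i j) (hrc : y r ≤ c) :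
      y r ≤ y i := by
    rw [mem_Ioc] at hr
    refine le_of_not_gt fun hir => (Q.min'_le r ?_).not_gt (hr.2.trans_lt hjq)
    simp [Q, hr.1, hir, hrc]
  refine ⟨q, hiq, hiy, hqc, bruhatLE_iff_rankCount_le.2 fun j t => ?_⟩
  have hyv := bruhatLE_iff_rankCount_le.1 hy j t
  rcases lt_or_ge j i with hji | hij
  · rwa [rankCount_mul_swap_of_notMem _ (by simpa using hji) (by simpa using hji.trans hiq)]
  rcases le_or_gt q j with hqj | hjq
  · rwa [rankCount_mul_swap_of_mem _ (mem_Iic.2 (hiq.le.trans hqj)) (mem_Iic.2 hqj)]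
  have hswap := rankCount_mul_swap_add y (mem_Iic.2 hij) (by simpa using hjq) (t := t)
  have hiy' : (y i : ℕ) < y q := hiy
  by_cases hmid : (y i : ℕ) < t ∧ t ≤ (y q : ℕ)
  · have := hc.rankCount_lt hv hy hij hjq hqc (hgap j hjq) hmid.1 (hmid.2.trans hqc)
    rw [if_neg (by omega), if_pos hmid.2] at hswap
    omega
  · split_ifs at hswap <;> omega

lemma IsGreedyValue.exists_lift (hc : IsGreedyValue v y i c)
    (hv : ∀ a b : Fin n, a < b → i ≤ a → v a < v b) (hy : bruhatLE y v) :
    ∃ y', bruhatLE y' v ∧ bruhatLE y y' ∧ (∀ r < i, y' r = y r) ∧ y' i = c := by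
  induction hd : (c : ℕ) - y i using Nat.strong_induction_on generalizing y with
  | _ d ih =>
    rcases (hc.apply_le hy).eq_or_lt with heq | hlt
    · exact ⟨y, hy, bruhatLE_refl y, fun _ _ => rfl, heq⟩
    obtain ⟨q, hiq, hiy, hqc, hy₁⟩ := hc.exists_swap hv hy hlt
    have hfix (r : Fin n) (hr : r < i) : (y * swap i q) r = y r := by
      simp [swap_apply_of_ne_of_ne hr.ne (hr.trans hiq).ne]
    have hdec : (c : ℕ) - (y * swap i q) i < d := by
      simp only [Perm.mul_apply, swap_apply_left]
      rw [Fin.lt_def] at hiy hlt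
      rw [Fin.le_def] at hqc
      omega
    obtain ⟨y', hy'v, hy₁y', hy'fix, hy'i⟩ := ih _ hdec (hc.congr hfix) hy₁ rfl
    exact ⟨y', hy'v, (bruhatLE_mul_swap hiq hiy).trans hy₁y',
      fun r hr => (hy'fix r hr).trans (hfix r hr), hy'i⟩

end Greedy

section Greatest

variable {n k : ℕ} {u v z : Perm (Fin n)}

lemma bruhatLE_of_forall_isGreedyValue (hv : ∀ a b : Fin n, a < b → k ≤ (a : ℕ) → v a < v b)
    (hz : ∀ i : Fin n, k ≤ (i : ℕ) → IsGreedyValue v z i (z i)) {y : Perm (Fin n)}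
    (hy : bruhatLE y v) (hyz : ∀ j : Fin n, (j : ℕ) < k → y j = z j) : bruhatLE y z := by
  suffices h : ∀ i ≤ n, ∀ y, bruhatLE y v → (∀ j : Fin n, (j : ℕ) < k → y j = z j) →
      (∀ r : Fin n, (r : ℕ) < i → y r = z r) → bruhatLE y z from
    h 0 (Nat.zero_le n) y hy hyz fun r hr => absurd hr (Nat.not_lt_zero _)
  intro i hi
  induction hi using Nat.decreasingInduction with
  | self =>
    intro y _ _ hyz
    rw [Equiv.ext fun r => hyz r r.2]
    exact bruhatLE_refl z
  | of_succ i hi ih =>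
    intro y hy hyk hyz
    set p : Fin n := ⟨i, hi⟩
    have hext {w : Perm (Fin n)} (hw : ∀ r : Fin n, (r : ℕ) < i → w r = z r) (hp : w p = z p)
        (r : Fin n) (hr : (r : ℕ) < i + 1) : w r = z r := by
      rcases (Nat.lt_succ_iff.1 hr).lt_or_eq with hr | hr
      · exact hw r hr
      · rwa [show r = p from Fin.ext hr]
    by_cases hik : i < k
    · exact ih y hy hyk (hext hyz (hyk p hik))
    have hpk : k ≤ (p : ℕ) := not_lt.1 hik
    obtain ⟨y', hy'v, hyy', hy'fix, hy'p⟩ :=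
      ((hz p hpk).congr fun r hr => hyz r hr).exists_lift
        (fun a b hab hpa => hv a b hab (hpk.trans hpa)) hy
    have hy'k (j : Fin n) (hj : (j : ℕ) < k) : y' j = z j :=
      (hy'fix j (Fin.lt_def.2 (by omega))).trans (hyk j hj)
    exact hyy'.trans (ih y' hy'v hy'k (hext (fun r hr => (hy'fix r hr).trans (hyz r hr)) hy'p))

lemma exists_greatest_bruhatLE_with_prefix
    (hv : ∀ a b : Fin n, a < b → k ≤ (a : ℕ) → v a < v b) (huv : bruhatLE u v) :
    ∃ z, (bruhatLE z v ∧ ∀ j : Fin n, (j : ℕ) < k → z j = u j) ∧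
      ∀ y, bruhatLE y v → (∀ j : Fin n, (j : ℕ) < k → y j = u j) → bruhatLE y z := by
  classical
  set T : Finset (Perm (Fin n)) := {y | bruhatLE y v ∧ ∀ j : Fin n, (j : ℕ) < k → y j = u j}
  have hmemT (y : Perm (Fin n)) :
      y ∈ T ↔ bruhatLE y v ∧ ∀ j : Fin n, (j : ℕ) < k → y j = u j := by
    simp [T]
  obtain ⟨z, hzT, hzmax⟩ := exists_maximal_bruhatLE ⟨u, (hmemT u).2 ⟨huv, fun _ _ => rfl⟩⟩
  obtain ⟨hzv, hzu⟩ := (hmemT z).1 hzT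
  -- a maximal `z` cannot be lifted, so it takes the greedy value at every free position
  have hgreedy (i : Fin n) (hki : k ≤ (i : ℕ)) : IsGreedyValue v z i (z i) := by
    obtain ⟨c, hc⟩ := exists_isGreedyValue v z i
    obtain ⟨z', hz'v, hzz', hz'fix, hz'i⟩ :=
      hc.exists_lift (fun a b hab hia => hv a b hab (hki.trans hia)) hzv
    have hz'T : z' ∈ T :=
      (hmemT z').2 ⟨hz'v, fun j hj => (hz'fix j (Fin.lt_def.2 (by omega))).trans (hzu j hj)⟩
    rwa [show z i = c by rw [← hz'i, hzmax z' hz'T hzz']]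
  refine ⟨z, ⟨hzv, hzu⟩, fun y hyv hyu => bruhatLE_of_forall_isGreedyValue hv hgreedy hyv ?_⟩
  exact fun j hj => (hyu j hj).trans (hzu j hj).symm

end Greatest

/-- For `v` a `k`-Grassmannian permutation and `u ≤ v`, there is a unique
maximal element of the Bruhat interval `[u,v]` agreeing with `u` on the first
`k` positions (as an ordered list). -/
theorem stmt4 {n k : ℕ} (u v : Equiv.Perm (Fin n)) (hv : IsGrassmannian k v)
    (huv : bruhatLE u v) :
    ∃! u' : Equiv.Perm (Fin n),
      (bruhatLE u u' ∧ bruhatLE u' v ∧ (∀ j : Fin n, (j : ℕ) < k → u' j = u j)) ∧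
      (∀ y : Equiv.Perm (Fin n), bruhatLE u y → bruhatLE y v →
        (∀ j : Fin n, (j : ℕ) < k → y j = u j) → bruhatLE y u') := by
  obtain ⟨z, ⟨hzv, hzu⟩, hzmax⟩ := exists_greatest_bruhatLE_with_prefix hv.2 huv
  have huz : bruhatLE u z := hzmax u huv fun _ _ => rfl
  refine ⟨z, ⟨⟨huz, hzv, hzu⟩, fun y _ hyv hyu => hzmax y hyv hyu⟩, ?_⟩
  rintro w ⟨⟨-, hwv, hwu⟩, hwmax⟩
  exact bruhatLE_antisymm (hzmax w hwv hwu) (hwmax z huz hzv hzu)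
end

section
/- Let w be a permutation of [n] (n ≥ 2) with w(i) = i + m mod n for some fixed m ∈ [n-1] (a spirograph permutation). Then w has no alignments: there is no pair of distinct arcs (i ↦ w(i)), (j ↦ w(j)) forming an alignment. -/
/-!
Measured cyclically from `p`, the two arcs of a rotation by `m` are `0 ↦ m` and `d ↦ d + m`
with `d = s - p`. An alignment needs `d + m ≤ d`, so adding `m` wraps around `n`; but then
`d + m < m`, contradicting `m < d + m`.
-/

/-- The pair of arcs `(p ↦ w p, s ↦ w s)` of the chord diagram of `w` is an
alignment: distinct noncrossing arcs oriented in the same direction.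
Combinatorially, measuring cyclic distances from `p`,
`w p ∈ [p, w s - 1]^cyc` and `w s ∈ [w p + 1, s]^cyc`. -/
def IsAlignment {n : ℕ} [NeZero n] (w : Equiv.Perm (Fin n)) (p s : Fin n) : Prop :=
  p ≠ s ∧ (w p - p) < (w s - p) ∧ (w s - p) ≤ (s - p)

theorem Fin.add_lt_right_of_add_le_left {n : ℕ} [NeZero n] {a b : Fin n} (hb : b ≠ 0)
    (h : a + b ≤ a) : a + b < b := by
  have hb' : 0 < b.val := Fin.pos_iff_ne_zero.mpr hb
  rw [Fin.le_def, Fin.val_add_eq_ite] at h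
  rw [Fin.lt_def, Fin.val_add_eq_ite]
  split_ifs at h ⊢ <;> omega

theorem stmt8_general {n : ℕ} [NeZero n] (w : Equiv.Perm (Fin n))
    (m : Fin n) (hm : m ≠ 0) (hw : ∀ i, w i = i + m) :
    ∀ p s : Fin n, ¬ IsAlignment w p s := by
  rintro p s ⟨-, h_lt, h_le⟩
  have hwp : w p - p = m := by rw [hw, add_sub_cancel_left]
  have hws : w s - p = (s - p) + m := by rw [hw, add_sub_right_comm]
  rw [hwp, hws] at h_lt
  rw [hws] at h_le
  exact (Fin.add_lt_right_of_add_le_left hm h_le).not_gt h_lt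

/-- A spirograph permutation `w(i) = i + m (mod n)` with `m ≢ 0` has no alignments. -/
theorem stmt8 {n : ℕ} [NeZero n] (hn : 2 ≤ n) (w : Equiv.Perm (Fin n))
    (m : Fin n) (hm : m ≠ 0) (hw : ∀ i, w i = i + m) :
    ∀ p s : Fin n, ¬ IsAlignment w p s :=
  stmt8_general w m hm hw
end

section
/- Let n ≥ 4 and let w be a fixed-point-free stabilized-interval-free permutation of [n] that is not a spirograph permutation (i.e., the values w(i) - i mod n are not all equal). Then w contains a crossed alignment: there is an alignment (p ↦ w(p), s ↦ w(s)) and a third arc (x ↦ w(x)) crossing both arcs of the alignment. -/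
/-- The arcs `(a ↦ w a)` and `(b ↦ w b)` cross: their endpoints interleave in
cyclic order (with the usual convention that a head meeting a tail at a common
vertex counts as a crossing). Measuring cyclic distances from one tail, the
other arc's tail lies in `(a, w a]` and its head strictly beyond `w a`
(or back at `a`), or symmetrically. -/
def Crossing {n : ℕ} [NeZero n] (w : Equiv.Perm (Fin n)) (a b : Fin n) : Prop :=
  (b ≠ a ∧ (b - a) ≤ (w a - a) ∧ ((w a - a) < (w b - a) ∨ w b = a)) ∨
  (a ≠ b ∧ (a - b) ≤ (w b - b) ∧ ((w b - b) < (w a - b) ∨ w a = b))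

/-!
Fix a vertex `b` and read positions counterclockwise from `b`, so that the arc `b ↦ w b` spans
the window `(0, L)`; suppose that no alignment is crossed. Let `g ↦ w g` be a forward arc inside
the window (both ends in it, `w g` after `g`). An orbit that starts under this arc and later
leaves the window moves strictly backwards until it leaves (its last forward step would be such
an arc followed by a descending orbit), and then either it leaves from above `g`, and the leaving
arc crosses the alignment `(g, b)`, or some step `x ↦ y` jumps below `g`, and `x ↦ y` crosses the
alignment `(g, y)`. Hence every orbit starting under a forward arc stays in the window, and,
orbits being cycles, so does every orbit starting under a backward arc of a staying point. So the
positions of staying points around a forward arc form an interval mapped into itself by `w`: a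
proper cyclic interval stabilized by `w`, whence `w` stabilizes a proper interval of `[n]` or its
complement.

A forward arc exists when `w` is fixed-point-free and not a spirograph: the displacement
`i ↦ w i - i` cannot be non-decreasing all around the circle without being constant, and where
it drops, at `i`, the arc from `i + 1` is a forward arc in the window of `b = i`.
-/

namespace CrossedAlignment

lemma image_eq_of_forall_mem {α : Type*} [DecidableEq α] (σ : Equiv.Perm α) {s : Finset α}
    (h : ∀ x ∈ s, σ x ∈ s) : s.image σ = s := by
  have := Finset.map_eq_of_subset (s := s) (f := σ.toEmbedding) fun y hy => by
    obtain ⟨x, hx, rfl⟩ := Finset.mem_map.1 hy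
    exact h x hx
  simpa [Finset.map_eq_image] using this

variable {n : ℕ}

def cycPos (b x : Fin n) : ℕ := (x - b).val

lemma cycPos_lt (b x : Fin n) : cycPos b x < n := (x - b).isLt

lemma val_sub_eq_ite (x y : Fin n) :
    (x - y).val = if y.val ≤ x.val then x.val - y.val else x.val + n - y.val := by
  split_ifs with h
  · exact Fin.coe_sub_iff_le.2 h
  · rw [Fin.coe_sub_iff_lt.2 (not_le.1 h)]; omega

lemma cycPos_eq_ite (b x : Fin n) :
    cycPos b x = if b.val ≤ x.val then x.val - b.val else x.val + n - b.val :=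
  val_sub_eq_ite x b

def cycIcc (b : Fin n) (lo hi : ℕ) : Finset (Fin n) := {x | lo ≤ cycPos b x ∧ cycPos b x ≤ hi}

@[simp] lemma mem_cycIcc {b x : Fin n} {lo hi : ℕ} :
    x ∈ cycIcc b lo hi ↔ lo ≤ cycPos b x ∧ cycPos b x ≤ hi := by
  simp [cycIcc]

lemma exists_Icc_eq_cycIcc_or_compl (b : Fin n) {lo hi : ℕ} (hlo : 0 < lo) (hlohi : lo ≤ hi)
    (hhi : hi < n) : ∃ A B : Fin n, A ≤ B ∧
      (Finset.Icc A B = cycIcc b lo hi ∨ Finset.Icc A B = (cycIcc b lo hi)ᶜ) := by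
  have hb := b.isLt
  rcases Nat.lt_or_ge (b + hi) n with h | h
  · refine ⟨⟨b + lo, by omega⟩, ⟨b + hi, h⟩, by simp [Fin.le_def, hlohi], Or.inl ?_⟩
    ext x
    have := cycPos_eq_ite b x
    simp only [Finset.mem_Icc, mem_cycIcc, Fin.le_def]
    split_ifs at this <;> omega
  rcases Nat.lt_or_ge (b + lo) n with h' | h'
  · refine ⟨⟨b + hi + 1 - n, by omega⟩, ⟨b + lo - 1, by omega⟩, by simp [Fin.le_def]; omega,
      Or.inr ?_⟩
    ext x
    have := cycPos_eq_ite b x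
    simp only [Finset.mem_Icc, Finset.mem_compl, mem_cycIcc, Fin.le_def]
    split_ifs at this <;> omega
  · refine ⟨⟨b + lo - n, by omega⟩, ⟨b + hi - n, by omega⟩, by simp [Fin.le_def]; omega,
      Or.inl ?_⟩
    ext x
    have := cycPos_eq_ite b x
    simp only [Finset.mem_Icc, mem_cycIcc, Fin.le_def]
    split_ifs at this <;> omega

variable (w : Equiv.Perm (Fin n))

def InWindow (b x : Fin n) : Prop := 0 < cycPos b x ∧ cycPos b x < cycPos b (w b)

def StaysInWindow (b x : Fin n) : Prop := ∀ k, InWindow w b ((⇑w)^[k] x)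

lemma not_inWindow_iff {b x : Fin n} :
    ¬ InWindow w b x ↔ cycPos b x = 0 ∨ cycPos b (w b) ≤ cycPos b x := by
  unfold InWindow; omega

variable [NeZero n]

lemma cycPos_injective (b : Fin n) : Function.Injective (cycPos b) := fun _ _ h =>
  sub_left_injective (Fin.val_injective h)

@[simp] lemma cycPos_self (b : Fin n) : cycPos b b = 0 := by simp [cycPos]

lemma cycPos_add_val (b c : Fin n) : cycPos b (b + c) = c.val := by
  simp [cycPos]

lemma cycPos_add_one_self (hn : 1 < n) (b : Fin n) : cycPos b (b + 1) = 1 := by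
  rw [cycPos_add_val, Fin.val_one', Nat.mod_eq_of_lt hn]

lemma val_sub_eq_cycPos (b x y : Fin n) :
    (x - y).val = if cycPos b y ≤ cycPos b x then cycPos b x - cycPos b y
      else cycPos b x + n - cycPos b y := by
  rw [show x - y = (x - b) - (y - b) by abel, val_sub_eq_ite]; rfl

lemma isAlignment_of_cycPos (b : Fin n) {p s : Fin n} (hsp : cycPos b s < cycPos b p)
    (hp : cycPos b p ≤ cycPos b (w p))
    (hs : cycPos b (w s) ≤ cycPos b s ∨ cycPos b (w p) < cycPos b (w s)) :
    IsAlignment w p s := by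
  have := cycPos_lt b (w p); have := cycPos_lt b (w s)
  refine ⟨fun h => by simp [h] at hsp, ?_, ?_⟩ <;>
    simp only [Fin.lt_def, Fin.le_def, val_sub_eq_cycPos b] <;> split_ifs <;> omega

lemma crossing_of_cycPos (b : Fin n) {a x : Fin n} (hax : cycPos b a < cycPos b x)
    (hx : cycPos b x ≤ cycPos b (w a))
    (hwx : cycPos b (w x) ≤ cycPos b a ∨ cycPos b (w a) < cycPos b (w x)) :
    Crossing w x a := by
  have := cycPos_lt b (w x); have := cycPos_lt b (w a)
  refine Or.inr ⟨fun h => by simp [h] at hax, ?_, ?_⟩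
  · simp only [Fin.le_def, val_sub_eq_cycPos b]; split_ifs <;> omega
  · rcases eq_or_ne (cycPos b (w x)) (cycPos b a) with h | h
    · exact Or.inr (cycPos_injective b h)
    · left; simp only [Fin.lt_def, val_sub_eq_cycPos b]; split_ifs <;> omega

lemma crossing_comm {x y : Fin n} : Crossing w x y ↔ Crossing w y x := by
  unfold Crossing; tauto

lemma crossing_apply_self {t : Fin n} (h : w t ≠ t) (h' : w (w t) ≠ w t) :
    Crossing w (w t) t := by
  have hA : cycPos t (w t) ≠ 0 := fun h0 => h (cycPos_injective t (h0.trans (cycPos_self t).symm))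
  have hC : cycPos t (w (w t)) ≠ cycPos t (w t) := (cycPos_injective t).ne h'
  rcases lt_or_gt_of_ne hC with hlt | hgt
  · refine Or.inl ⟨h.symm, ?_, Or.inr rfl⟩
    have := cycPos_lt t (w t)
    simp only [Fin.le_def, val_sub_eq_cycPos t, cycPos_self]; split_ifs <;> omega
  · exact crossing_of_cycPos w t (by simp; omega) le_rfl (Or.inr hgt)

def HasCrossedAlignment : Prop :=
  ∃ p s x, IsAlignment w p s ∧ Crossing w x p ∧ Crossing w x s

lemma hasCrossedAlignment_of_exit {b g x : Fin n} (hwg : InWindow w b (w g))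
    (hgx : cycPos b g < cycPos b x) (hxg : cycPos b x ≤ cycPos b (w g))
    (hexit : ¬ InWindow w b (w x)) : HasCrossedAlignment w := by
  have hg : cycPos b g ≠ 0 := fun h => by
    have := hwg.2
    rwa [cycPos_injective b (h.trans (cycPos_self b).symm), lt_self_iff_false] at this
  have hwx : cycPos b (w x) ≠ cycPos b (w b) := fun h => by
    have := w.injective (cycPos_injective b h); subst this; simp at hgx
  rw [not_inWindow_iff] at hexit
  have := hwg.2
  refine ⟨g, b, x, isAlignment_of_cycPos w b ?_ ?_ ?_, crossing_of_cycPos w b hgx hxg ?_,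
    crossing_of_cycPos w b ?_ ?_ ?_⟩ <;> (try simp only [cycPos_self]) <;> omega

lemma hasCrossedAlignment_of_jump_below (hfpf : ∀ i, w i ≠ i) {b g x : Fin n}
    (hgx : cycPos b g < cycPos b x) (hxg : cycPos b x ≤ cycPos b (w g))
    (hjump : cycPos b (w x) < cycPos b g)
    (hnext : cycPos b (w (w x)) ≤ cycPos b (w x) ∨ cycPos b (w g) < cycPos b (w (w x))) :
    HasCrossedAlignment w :=
  ⟨g, w x, x, isAlignment_of_cycPos w b hjump (by omega) hnext,
    crossing_of_cycPos w b hgx hxg (Or.inl hjump.le),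
    (crossing_comm w).1 (crossing_apply_self w (hfpf x) (hfpf (w x)))⟩

lemma hasCrossedAlignment_of_descent (hfpf : ∀ i, w i ≠ i) {b g : Fin n}
    (hwg : InWindow w b (w g)) (hgwg : cycPos b g < cycPos b (w g))
    {u : ℕ → Fin n} (hu : ∀ k, u (k + 1) = w (u k)) {s m : ℕ} (hsm : s ≤ m)
    (hs : cycPos b g ≤ cycPos b (u s)) (hs' : cycPos b (u s) ≤ cycPos b (w g))
    (hdesc : ∀ k, s ≤ k → k < m → cycPos b (u (k + 1)) < cycPos b (u k))
    (hexit : ¬ InWindow w b (u (m + 1))) : HasCrossedAlignment w := by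
  by_contra hw
  have hne : ∀ k, s ≤ k → k ≤ m → cycPos b (u k) ≠ cycPos b g := by
    intro k hsk hkm hk
    rw [← cycPos_injective b hk] at hgwg hwg
    rcases hkm.lt_or_eq with hkm | rfl
    · have := hdesc k hsk hkm; rw [hu] at this; omega
    · exact hexit (hu k ▸ hwg)
  have hbetween : ∀ k, s ≤ k → k ≤ m →
      cycPos b g ≤ cycPos b (u k) ∧ cycPos b (u k) ≤ cycPos b (w g) := by
    intro k hsk
    induction k, hsk using Nat.le_induction with
    | base => exact fun _ => ⟨hs, hs'⟩
    | succ k hsk ih =>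
      intro hkm
      obtain ⟨h1, h2⟩ := ih (by omega)
      have hd := hdesc k hsk (by omega)
      refine ⟨not_lt.1 fun hjump => hw ?_, by omega⟩
      have hgx : cycPos b g < cycPos b (u k) := lt_of_le_of_ne h1 (hne k hsk (by omega)).symm
      rw [hu] at hjump
      refine hasCrossedAlignment_of_jump_below w hfpf hgx h2 hjump ?_
      rw [← hu, ← hu]
      rcases (show k + 1 < m ∨ k + 1 = m by omega) with hlt | rfl
      · exact Or.inl (hdesc (k + 1) (by omega) hlt).le
      · have := hwg.2
        rw [not_inWindow_iff] at hexit
        omega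
  obtain ⟨h1, h2⟩ := hbetween m hsm le_rfl
  exact hw (hasCrossedAlignment_of_exit w hwg
    (lt_of_le_of_ne h1 (hne m hsm le_rfl).symm) h2 (hu m ▸ hexit))

lemma cycPos_succ_lt_of_exit (hw : ¬ HasCrossedAlignment w) (hfpf : ∀ i, w i ≠ i)
    {b : Fin n} {u : ℕ → Fin n} (hu : ∀ k, u (k + 1) = w (u k)) {m : ℕ}
    (hin : ∀ k ≤ m, InWindow w b (u k)) (hexit : ¬ InWindow w b (u (m + 1))) :
    ∀ k < m, cycPos b (u (k + 1)) < cycPos b (u k) := by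
  intro k hk
  induction hd : m - k using Nat.strong_induction_on generalizing k with
  | _ d ih =>
    by_contra hfwd
    have hne : cycPos b (u (k + 1)) ≠ cycPos b (u k) :=
      (cycPos_injective b).ne (hu k ▸ hfpf (u k))
    refine hw (hasCrossedAlignment_of_descent w hfpf (g := u k) (s := k + 1)
      (hu k ▸ hin (k + 1) hk) (by rw [← hu]; omega) hu hk (by omega) (by rw [hu])
      (fun j hj hjm => ih (m - j) (by omega) j hjm rfl) hexit)

lemma staysInWindow_of_forward (hw : ¬ HasCrossedAlignment w) (hfpf : ∀ i, w i ≠ i)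
    {b g : Fin n} (hg : InWindow w b g) (hwg : InWindow w b (w g))
    (hgwg : cycPos b g < cycPos b (w g)) {v : Fin n} (hgv : cycPos b g ≤ cycPos b v)
    (hvg : cycPos b v ≤ cycPos b (w g)) : StaysInWindow w b v := by
  classical
  by_contra hv
  have hex : ∃ k, ¬ InWindow w b ((⇑w)^[k] v) := by simpa [StaysInWindow] using hv
  have hu : ∀ k, (⇑w)^[k + 1] v = w ((⇑w)^[k] v) := fun k => Function.iterate_succ_apply' _ _ _
  obtain ⟨m, hm⟩ : ∃ m, Nat.find hex = m + 1 := Nat.exists_eq_succ_of_ne_zero fun h0 => by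
    have := Nat.find_spec hex
    rw [h0, Function.iterate_zero_apply] at this
    exact this ⟨by have := hg.1; omega, by have := hwg.2; omega⟩
  have hin : ∀ k ≤ m, InWindow w b ((⇑w)^[k] v) := fun k hk =>
    not_not.1 (Nat.find_min hex (by omega))
  have hexit : ¬ InWindow w b ((⇑w)^[m + 1] v) := hm ▸ Nat.find_spec hex
  exact hw (hasCrossedAlignment_of_descent w hfpf (u := fun k => (⇑w)^[k] v) hwg hgwg hu
    (Nat.zero_le m) hgv hvg (fun k _ hk => cycPos_succ_lt_of_exit w hw hfpf hu hin hexit k hk)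
    hexit)

lemma staysInWindow_of_backward (hw : ¬ HasCrossedAlignment w) (hfpf : ∀ i, w i ≠ i)
    {b z : Fin n} (hz : StaysInWindow w b z) {v : Fin n}
    (hzv : cycPos b (w z) ≤ cycPos b v) (hvz : cycPos b v ≤ cycPos b z) :
    StaysInWindow w b v := by
  classical
  rcases hvz.lt_or_eq with hvz | hvz
  swap
  · rwa [cycPos_injective b hvz]
  have hu : ∀ k, (⇑w)^[k + 1] z = w ((⇑w)^[k] z) := fun k => Function.iterate_succ_apply' _ _ _
  -- the orbit of `z` returns to `z`, so at some step it jumps forward over `v`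
  have hex : ∃ k, cycPos b v < cycPos b ((⇑w)^[k + 1] z) := by
    refine ⟨orderOf w - 1, ?_⟩
    rwa [Nat.sub_add_cancel (orderOf_pos w), ← Equiv.Perm.coe_pow, pow_orderOf_eq_one,
      Equiv.Perm.coe_one, id]
  have hk := Nat.find_spec hex
  obtain ⟨k, hk'⟩ : ∃ k, Nat.find hex = k + 1 := Nat.exists_eq_succ_of_ne_zero fun h0 => by
    rw [h0, zero_add, Function.iterate_one] at hk; omega
  have hjump : cycPos b ((⇑w)^[k + 1] z) ≤ cycPos b v := not_lt.1 (Nat.find_min hex (by omega))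
  rw [hk', hu] at hk
  refine staysInWindow_of_forward w hw hfpf (hz (k + 1)) ?_ (by omega) hjump hk.le
  rw [← hu]; exact hz (k + 2)

lemma staysInWindow_of_mem_uIcc (hw : ¬ HasCrossedAlignment w) (hfpf : ∀ i, w i ≠ i)
    {b x v : Fin n} (hx : StaysInWindow w b x)
    (hv : cycPos b v ∈ Set.uIcc (cycPos b x) (cycPos b (w x))) : StaysInWindow w b v := by
  have hwx : InWindow w b (w x) := by simpa using hx 1
  rcases lt_or_gt_of_ne ((cycPos_injective b).ne (hfpf x)) with hlt | hgt
  · rw [Set.uIcc_of_gt hlt] at hv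
    exact staysInWindow_of_backward w hw hfpf hx hv.1 hv.2
  · rw [Set.uIcc_of_lt hgt] at hv
    exact staysInWindow_of_forward w hw hfpf (hx 0) hwx hgt hv.1 hv.2

lemma exists_mapsTo_cycIcc (hw : ¬ HasCrossedAlignment w) (hfpf : ∀ i, w i ≠ i)
    {b a : Fin n} (ha : InWindow w b a) (hwa : InWindow w b (w a))
    (hfwd : cycPos b a < cycPos b (w a)) : ∃ lo hi, 0 < lo ∧ lo ≤ hi ∧
      hi < cycPos b (w b) ∧ ∀ x ∈ cycIcc b lo hi, w x ∈ cycIcc b lo hi := by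
  set S : Set ℕ := {i | ∃ x, cycPos b x = i ∧ StaysInWindow w b x}
  set C := S.ordConnectedComponent (cycPos b a)
  have hS : S ⊆ Set.Ioo 0 (cycPos b (w b)) := by
    rintro _ ⟨x, rfl, hx⟩
    exact hx 0
  have hCS : C ⊆ S := Set.ordConnectedComponent_subset
  have haC : cycPos b a ∈ C := Set.self_mem_ordConnectedComponent.2
    ⟨a, rfl, staysInWindow_of_forward w hw hfpf ha hwa hfwd le_rfl hfwd.le⟩
  have hmem : ∀ x, cycPos b x ∈ C → cycPos b (w x) ∈ C := by
    intro x hx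
    obtain ⟨y, hyx, hy⟩ := hCS hx
    rw [cycPos_injective b hyx] at hy
    have hxS : Set.uIcc (cycPos b x) (cycPos b (w x)) ⊆ S := by
      intro i hi
      have hin : i < n := by
        have := cycPos_lt b x; have := cycPos_lt b (w x)
        rw [Set.mem_uIcc] at hi; omega
      exact ⟨b + ⟨i, hin⟩, cycPos_add_val b _,
        staysInWindow_of_mem_uIcc w hw hfpf hy (by rwa [cycPos_add_val])⟩
    exact Set.mem_ordConnectedComponent_trans hx (Set.mem_ordConnectedComponent.2 hxS)
  have hCne : C.Nonempty := ⟨_, haC⟩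
  have hCbdd : BddAbove C := ⟨cycPos b (w b), fun i hi => (hS (hCS hi)).2.le⟩
  have hlo := Nat.sInf_mem hCne
  have hhi := Nat.sSup_mem hCne hCbdd
  refine ⟨sInf C, sSup C, (hS (hCS hlo)).1, le_csSup hCbdd hlo, (hS (hCS hhi)).2, ?_⟩
  intro x hx
  rw [mem_cycIcc] at hx ⊢
  have hwx := hmem x (Set.OrdConnected.out inferInstance hlo hhi hx)
  exact ⟨Nat.sInf_le hwx, le_csSup hCbdd hwx⟩

lemma not_forall_mem_cycIcc
    (hsif : ∀ a b : Fin n, a ≤ b → Finset.Icc a b ≠ Finset.univ →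
      (Finset.Icc a b).image w ≠ Finset.Icc a b)
    {b : Fin n} {lo hi : ℕ} (hlo : 0 < lo) (hlohi : lo ≤ hi) (hhi : hi < n) :
    ¬ ∀ x ∈ cycIcc b lo hi, w x ∈ cycIcc b lo hi := by
  intro hmaps
  obtain ⟨A, B, hAB, hAB'⟩ := exists_Icc_eq_cycIcc_or_compl b hlo hlohi hhi
  set T := cycIcc b lo hi
  have hbT : b ∉ T := by simp [T]; omega
  have hT : b + ⟨lo, by omega⟩ ∈ T := by simp [T, cycPos_add_val, hlohi]
  have hmaps' : ∀ x ∈ Tᶜ, w x ∈ Tᶜ := by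
    intro x hx
    rw [Finset.mem_compl] at hx ⊢
    intro hwx
    obtain ⟨y, hy, hyx⟩ := Finset.mem_image.1 ((image_eq_of_forall_mem w hmaps).symm ▸ hwx)
    exact hx (w.injective hyx ▸ hy)
  rcases hAB' with h | h
  · exact hsif A B hAB (h ▸ fun hu => hbT (hu ▸ Finset.mem_univ b))
      (h ▸ image_eq_of_forall_mem w hmaps)
  · exact hsif A B hAB (h ▸ fun hu => Finset.mem_compl.1 (hu ▸ Finset.mem_univ _) hT)
      (h ▸ image_eq_of_forall_mem w hmaps')

open Fin.NatCast in
lemma exists_cycPos_succ_apply_lt (hns : ¬ ∃ m : Fin n, ∀ i, w i = i + m) :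
    ∃ i : Fin n, cycPos (i + 1) (w (i + 1)) < cycPos i (w i) := by
  by_contra! hle
  have hsum : ∑ i, cycPos i (w i) = ∑ i, cycPos (i + 1) (w (i + 1)) :=
    (Equiv.sum_comp (Equiv.addRight 1) fun i => cycPos i (w i)).symm
  have hsucc := (Finset.sum_eq_sum_iff_of_le fun i _ => hle i).1 hsum
  have hconst : ∀ k : ℕ, cycPos (k : Fin n) (w k) = cycPos 0 (w 0) := by
    intro k
    induction k with
    | zero => simp
    | succ k ih => rw [Nat.cast_succ, ← hsucc _ (Finset.mem_univ _), ih]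
  refine hns ⟨w 0, fun i => ?_⟩
  have hi : w i - i = w 0 - 0 := Fin.val_injective (by simpa [cycPos] using hconst i.val)
  rw [sub_zero] at hi
  rw [← hi, add_sub_cancel]

lemma exists_forward_arc_succ (hn : 1 < n) (hfpf : ∀ i, w i ≠ i)
    (hns : ¬ ∃ m : Fin n, ∀ i, w i = i + m) :
    ∃ b : Fin n, 1 < cycPos b (w (b + 1)) ∧ cycPos b (w (b + 1)) < cycPos b (w b) := by
  obtain ⟨b, hb⟩ := exists_cycPos_succ_apply_lt w hns
  refine ⟨b, ?_⟩
  have hpos : cycPos (b + 1) (w (b + 1)) ≠ 0 := fun h =>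
    hfpf (b + 1) (cycPos_injective _ (h.trans (cycPos_self _).symm))
  have hne : cycPos b (w (b + 1)) ≠ cycPos b (w b) :=
    (cycPos_injective b).ne (w.injective.ne fun h => by simpa [h] using cycPos_add_one_self hn b)
  have hsucc := val_sub_eq_cycPos b (w (b + 1)) (b + 1)
  rw [cycPos_add_one_self hn] at hsucc
  have := cycPos_lt b (w b)
  change cycPos (b + 1) (w (b + 1)) = _ at hsucc
  split_ifs at hsucc <;> omega

lemma one_lt_of_forall_apply_ne (hfpf : ∀ i, w i ≠ i) : 1 < n := by
  by_contra h
  have : Subsingleton (Fin n) := Fin.subsingleton_iff_le_one.2 (by omega)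
  exact hfpf 0 (Subsingleton.elim _ _)

end CrossedAlignment

open CrossedAlignment

theorem stmt9_general {n : ℕ} [NeZero n] (w : Equiv.Perm (Fin n))
    (hfpf : ∀ i, w i ≠ i)
    (hsif : ∀ a b : Fin n, a ≤ b → Finset.Icc a b ≠ Finset.univ →
      (Finset.Icc a b).image w ≠ Finset.Icc a b)
    (hns : ¬ ∃ m : Fin n, ∀ i, w i = i + m) :
    ∃ p s x : Fin n, IsAlignment w p s ∧ Crossing w x p ∧ Crossing w x s := by
  by_contra hw
  have hn := one_lt_of_forall_apply_ne w hfpf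
  obtain ⟨b, h1, h2⟩ := exists_forward_arc_succ w hn hfpf hns
  have hb1 := cycPos_add_one_self hn b
  obtain ⟨lo, hi, hlo, hlohi, hhi, hmaps⟩ := exists_mapsTo_cycIcc w hw hfpf (a := b + 1)
    ⟨by omega, by omega⟩ ⟨by omega, h2⟩ (by omega)
  exact not_forall_mem_cycIcc w hsif hlo hlohi (hhi.trans (cycPos_lt b (w b))) hmaps

/-- A fixed-point-free stabilized-interval-free permutation of `[n]`, `n ≥ 4`,
which is not a spirograph permutation contains a crossed alignment. -/
theorem stmt9 {n : ℕ} [NeZero n] (hn : 4 ≤ n) (w : Equiv.Perm (Fin n))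
    (hfpf : ∀ i, w i ≠ i)
    (hsif : ∀ a b : Fin n, a ≤ b → Finset.Icc a b ≠ Finset.univ →
      (Finset.Icc a b).image w ≠ Finset.Icc a b)
    (hns : ¬ ∃ m : Fin n, ∀ i, w i = i + m) :
    ∃ p s x : Fin n, IsAlignment w p s ∧ Crossing w x p ∧ Crossing w x s :=
  stmt9_general w hfpf hsif hns
end

section
/- For a fixed-point-free permutation w of [n], if m_i := (w(i) - i) mod n and m_{i+1} := (w(i+1) - (i+1)) mod n satisfy m_i < m_{i+1} (indices mod n), then the arcs (i ↦ w(i)) and (i+1 ↦ w(i+1)) form a crossing in the chord diagram of w. -/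
/-- If `m_i := (w i - i) mod n` satisfies `m_i < m_{i+1}` (indices mod `n`) for a
fixed-point-free permutation `w`, then the arcs `(i ↦ w i)` and
`(i+1 ↦ w (i+1))` form a crossing in the chord diagram of `w`. -/
theorem stmt10 {n : ℕ} [NeZero n] (w : Equiv.Perm (Fin n)) (hfpf : ∀ i, w i ≠ i)
    (i : Fin n) (h : (w i - i) < (w (i + 1) - (i + 1))) :
    Crossing w i (i + 1) := by
  have hn : 1 < n := by
    have h1 := Fin.lt_def.mp h
    have h2 := (w (i + 1) - (i + 1)).isLt
    omega
  have hone : (1 : Fin n).val = 1 := by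
    simp [Fin.val_one', Nat.mod_eq_of_lt hn]
  have hba : i + 1 ≠ i := by
    intro he
    have h1 : (1 : Fin n) = 0 := by
      rw [← add_sub_cancel_left i 1, he, sub_self]
    rw [h1] at hone
    simp at hone
  have hsub : (i + 1) - i = (1 : Fin n) := add_sub_cancel_left i 1
  have hx0 : w i - i ≠ 0 := sub_ne_zero.mpr (hfpf i)
  have hxv : (w i - i).val ≠ 0 := fun h0 => hx0 (Fin.ext (by simp [h0]))
  have hle : ((i + 1) - i) ≤ (w i - i) := by
    rw [hsub, Fin.le_def, hone]
    omega
  by_cases hc : w (i + 1) = i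
  · exact Or.inl ⟨hba, hle, Or.inr hc⟩
  · refine Or.inl ⟨hba, hle, Or.inl ?_⟩
    have key : w (i + 1) - i = (w (i + 1) - (i + 1)) + 1 := by
      rw [sub_add, add_sub_cancel_right]
    rw [key]
    have hne : (w (i + 1) - (i + 1)) + 1 ≠ 0 := by
      rw [← key]
      exact sub_ne_zero.mpr hc
    have h2 := (w (i + 1) - (i + 1)).isLt
    have h3 : (w (i + 1) - (i + 1)).val ≠ n - 1 := by
      intro he
      apply hne
      apply Fin.ext
      rw [Fin.val_add, hone, he, Nat.sub_add_cancel (by omega : 1 ≤ n), Nat.mod_self]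
      rfl
    have hval : ((w (i + 1) - (i + 1)) + 1).val = (w (i + 1) - (i + 1)).val + 1 := by
      rw [Fin.val_add, hone, Nat.mod_eq_of_lt (by omega)]
    rw [Fin.lt_def, hval]
    rw [Fin.lt_def] at h
    omega
end

section
/- Let w be a fixed-point-free permutation of [n_1+n_2] that decomposes as w = w1 ⊕ w2, meaning w restricts to a fixed-point-free permutation w1 of [n_1] and a fixed-point-free permutation of [n_1+1, n_1+n_2] corresponding to w2 on [n_2]. Let k_i denote the number of anti-exceedances of w_i (indices i with w_i^{-1}(i) > i). Then the number of alignments of w equals (number of alignments of w1) + (number of alignments of w2) + k_1(n_2 - k_2) + k_2(n_1 - k_1). -/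
instance {n : ℕ} [NeZero n] (w : Equiv.Perm (Fin n)) (p s : Fin n) :
    Decidable (IsAlignment w p s) := by
  unfold IsAlignment; infer_instance

/-- The number of alignments of `w`. -/
def alignCount {m : ℕ} [NeZero m] (w : Equiv.Perm (Fin m)) : ℕ :=
  (Finset.univ.filter fun p : Fin m × Fin m => IsAlignment w p.1 p.2).card

/-- The number of anti-exceedances of `w`: elements `x` with `w⁻¹ x > x`. -/
def antiExcCount {m : ℕ} (w : Equiv.Perm (Fin m)) : ℕ :=
  (Finset.univ.filter fun x : Fin m => x < w.symm x).card

open Finset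

lemma Fin.val_sub_eq_ite {N : ℕ} (a b : Fin N) :
    ((a - b : Fin N) : ℕ) = if b ≤ a then (a : ℕ) - b else N + a - b := by
  split_ifs with h
  · exact Fin.coe_sub_iff_le.2 h
  · exact Fin.coe_sub_iff_lt.2 (not_le.1 h)

/-- Measured from `p`, cyclic distance lists the points `≥ p` first and then those `< p`, each in
increasing order; a strictly monotone map preserves both the split and the order. -/
lemma StrictMono.val_sub_lt_val_sub_iff {n N : ℕ} {e : Fin n → Fin N} (he : StrictMono e)
    (p x y : Fin n) :
    ((e x - e p : Fin N) : ℕ) < (e y - e p : Fin N) ↔ ((x - p : Fin n) : ℕ) < (y - p : Fin n) := by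
  have hx := he.le_iff_le (a := p) (b := x)
  have hy := he.le_iff_le (a := p) (b := y)
  have hxy := he.lt_iff_lt (a := x) (b := y)
  simp only [Fin.val_sub_eq_ite, Fin.le_def, Fin.lt_def] at hx hy hxy ⊢
  split_ifs <;> omega

lemma isAlignment_iff_of_strictMono {n N : ℕ} [NeZero n] [NeZero N] {e : Fin n → Fin N}
    (he : StrictMono e) {w : Equiv.Perm (Fin N)} {v : Equiv.Perm (Fin n)}
    (hwv : ∀ i, w (e i) = e (v i)) (p s : Fin n) :
    IsAlignment w (e p) (e s) ↔ IsAlignment v p s := by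
  simp only [IsAlignment, hwv, he.injective.ne_iff, ← not_lt, Fin.lt_def,
    he.val_sub_lt_val_sub_iff]

lemma isAlignment_iff_of_separated {N : ℕ} [NeZero N] {w : Equiv.Perm (Fin N)} {p s : Fin N}
    (hp : w p ≠ p) (hs : w s ≠ s)
    (hsep : max p (w p) < min s (w s) ∨ max s (w s) < min p (w p)) :
    IsAlignment w p s ↔ p < w p ∧ w s < s := by
  simp only [max_lt_iff, lt_min_iff, Fin.lt_def] at hsep
  simp only [IsAlignment, ne_eq, Fin.ext_iff, Fin.lt_def, Fin.le_def, Fin.val_sub_eq_ite] at hp hs ⊢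
  split_ifs <;> omega

lemma alignCount_eq_sum {m : ℕ} [NeZero m] (w : Equiv.Perm (Fin m)) :
    alignCount w = ∑ p, ∑ s, if IsAlignment w p s then 1 else 0 := by
  rw [alignCount, card_filter, Fintype.sum_prod_type]

lemma antiExcCount_eq_card_apply_lt {m : ℕ} (w : Equiv.Perm (Fin m)) :
    antiExcCount w = #{i | w i < i} :=
  card_bij' (fun x _ => w.symm x) (fun i _ => w i) (by simp) (by simp) (by simp) (by simp)

lemma card_lt_apply_eq_sub_antiExcCount {m : ℕ} {w : Equiv.Perm (Fin m)} (hw : ∀ i, w i ≠ i) :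
    #{i | i < w i} = m - antiExcCount w := by
  have hcompl : #{i | w i < i} = #{i | ¬ i < w i} := by
    congr 1; ext i; simp [lt_iff_le_and_ne, hw i, Ne.symm (hw i)]
  have hsum := card_filter_add_card_filter_not (s := (univ : Finset (Fin m))) (fun i => i < w i)
  rw [card_univ, Fintype.card_fin] at hsum
  rw [antiExcCount_eq_card_apply_lt, hcompl]
  omega

lemma sum_sum_ite_and {α β : Type*} [Fintype α] [Fintype β] (P : α → Prop) (Q : β → Prop)
    [DecidablePred P] [DecidablePred Q] :
    ∑ a, ∑ b, (if P a ∧ Q b then 1 else 0 : ℕ) = #{a | P a} * #{b | Q b} := by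
  simp only [card_filter, sum_mul_sum, ite_zero_mul_ite_zero, mul_one]

section DirectSum

variable {n1 n2 : ℕ} [NeZero (n1 + n2)] {w : Equiv.Perm (Fin (n1 + n2))}
  {w1 : Equiv.Perm (Fin n1)} {w2 : Equiv.Perm (Fin n2)}

lemma isAlignment_castAdd_natAdd_iff
    (h1 : ∀ i, w (Fin.castAdd n2 i) = Fin.castAdd n2 (w1 i))
    (h2 : ∀ j, w (Fin.natAdd n1 j) = Fin.natAdd n1 (w2 j))
    {i : Fin n1} {j : Fin n2} (hi : w1 i ≠ i) (hj : w2 j ≠ j) :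
    IsAlignment w (Fin.castAdd n2 i) (Fin.natAdd n1 j) ↔ i < w1 i ∧ w2 j < j := by
  rw [isAlignment_iff_of_separated, h1, h2, (Fin.strictMono_castAdd n2).lt_iff_lt,
    (Fin.strictMono_natAdd n1).lt_iff_lt]
  · rw [h1]; exact (Fin.strictMono_castAdd n2).injective.ne hi
  · rw [h2]; exact (Fin.strictMono_natAdd n1).injective.ne hj
  · left
    simp only [h1, h2, max_lt_iff, lt_min_iff, Fin.lt_def, Fin.val_castAdd, Fin.val_natAdd]
    omega

lemma isAlignment_natAdd_castAdd_iff
    (h1 : ∀ i, w (Fin.castAdd n2 i) = Fin.castAdd n2 (w1 i))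
    (h2 : ∀ j, w (Fin.natAdd n1 j) = Fin.natAdd n1 (w2 j))
    {j : Fin n2} {i : Fin n1} (hj : w2 j ≠ j) (hi : w1 i ≠ i) :
    IsAlignment w (Fin.natAdd n1 j) (Fin.castAdd n2 i) ↔ j < w2 j ∧ w1 i < i := by
  rw [isAlignment_iff_of_separated, h1, h2, (Fin.strictMono_castAdd n2).lt_iff_lt,
    (Fin.strictMono_natAdd n1).lt_iff_lt]
  · rw [h2]; exact (Fin.strictMono_natAdd n1).injective.ne hj
  · rw [h1]; exact (Fin.strictMono_castAdd n2).injective.ne hi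
  · right
    simp only [h1, h2, max_lt_iff, lt_min_iff, Fin.lt_def, Fin.val_castAdd, Fin.val_natAdd]
    omega

end DirectSum

/-- Alignments of a direct sum `w = w₁ ⊕ w₂` of fixed-point-free permutations:
`#Alignments(w) = #Alignments(w₁) + #Alignments(w₂) + k₁(n₂-k₂) + k₂(n₁-k₁)`,
where `kᵢ` is the number of anti-exceedances of `wᵢ`. -/
theorem stmt13 {n1 n2 : ℕ} [NeZero n1] [NeZero n2] [NeZero (n1 + n2)]
    (w : Equiv.Perm (Fin (n1 + n2)))
    (w1 : Equiv.Perm (Fin n1)) (w2 : Equiv.Perm (Fin n2))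
    (h1 : ∀ i : Fin n1, w (Fin.castAdd n2 i) = Fin.castAdd n2 (w1 i))
    (h2 : ∀ j : Fin n2, w (Fin.natAdd n1 j) = Fin.natAdd n1 (w2 j))
    (hf1 : ∀ i, w1 i ≠ i) (hf2 : ∀ j, w2 j ≠ j) :
    alignCount w = alignCount w1 + alignCount w2
      + antiExcCount w1 * (n2 - antiExcCount w2)
      + antiExcCount w2 * (n1 - antiExcCount w1) := by
  simp only [alignCount_eq_sum, Fin.sum_univ_add, sum_add_distrib,
    isAlignment_iff_of_strictMono (Fin.strictMono_castAdd n2) h1,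
    isAlignment_iff_of_strictMono (Fin.strictMono_natAdd n1) h2,
    fun i j => isAlignment_castAdd_natAdd_iff h1 h2 (hf1 i) (hf2 j),
    fun j i => isAlignment_natAdd_castAdd_iff h1 h2 (hf2 j) (hf1 i),
    sum_sum_ite_and, card_lt_apply_eq_sub_antiExcCount hf1, card_lt_apply_eq_sub_antiExcCount hf2,
    ← antiExcCount_eq_card_apply_lt]
  ring
end

section
/- For n ≥ 1, [x^n] (1/(n+1)) (1 + 2x + Σ_{i≥2} (i-1)x^i)^{n+1} = Σ_{k=1}^n b_{n,k}/(n-k+1)!, where b_{n,k} = B_{n,k}(2·1!, 1·2!, 2·3!, ..., (n-k)·(n-k+1)!) and B_{n,k} is the partial Bell polynomial. -/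
/-- `P` is a set partition of `Fin n` (nonempty pairwise disjoint blocks
covering `Fin n`). -/
def IsSetPartition {n : ℕ} (P : Finset (Finset (Fin n))) : Prop :=
  (∀ B ∈ P, B.Nonempty) ∧
  (∀ B ∈ P, ∀ C ∈ P, B ≠ C → Disjoint B C) ∧
  (∀ x : Fin n, ∃ B ∈ P, x ∈ B)

open Classical in
/-- The partial Bell polynomial `B_{n,k}(x₁,…,x_{n-k+1})`: the sum over set
partitions of `[n]` into `k` blocks of the product of `x_{|B|}` over blocks. -/
noncomputable def partialBell (n k : ℕ) (x : ℕ → ℚ) : ℚ :=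
  ∑ P ∈ Finset.univ.filter
      (fun P : Finset (Finset (Fin n)) => IsSetPartition P ∧ P.card = k),
    ∏ B ∈ P, x B.card

/-- `b_{n,k} = B_{n,k}(2·1!, 1·2!, 2·3!, …, (n-k)·(n-k+1)!)`, i.e. the partial
Bell polynomial evaluated at `x_m = s_c(m)·m!`. -/
noncomputable def bnk (n k : ℕ) : ℚ :=
  partialBell n k fun m => (if m = 1 then (2 : ℚ) else (m : ℚ) - 1) * (Nat.factorial m)

/-!
Let `g` be the series and `y t = t! [xᵗ] g`. Multiplying exponential generating functions gives
the exponential formula `n! [xⁿ] g^m = Σ_{f : [n] → [m]} ∏ⱼ y |f⁻¹ j|`. Group the maps `f` by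
their kernel partition: a partition with `k` blocks is the kernel of exactly
`m (m-1) ⋯ (m-k+1)` maps, and since `y 0 = 1` only its blocks contribute to the product. As `y`
agrees with the weights of `b_{n,k}` at positive arguments, `m = n + 1` gives
`n! [xⁿ] g^{n+1} = Σₖ (n+1) n ⋯ (n-k+2) b_{n,k}`; dividing by `(n+1)!` gives the claim.
-/

open Finset
open scoped Nat

section FiberSum

variable {R : Type*} [CommSemiring R] (y : ℕ → R)

def fiberSum (α : Type*) [Fintype α] [DecidableEq α] (m : ℕ) : R :=
  ∑ f : α → Fin m, ∏ j, y #{i | f i = j}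

variable {α : Type*} [Fintype α] [DecidableEq α]

lemma sum_prod_fiber_castSucc_eq_fiberSum (m : ℕ) (S : Finset α) :
    ∑ f : α → Fin (m + 1) with univ.filter (f · = Fin.last m) = S,
      ∏ j : Fin m, y #{i | f i = j.castSucc} = fiberSum y (↥Sᶜ) m := by
  have last_iff {f : α → Fin (m + 1)}
      (hf : f ∈ univ.filter fun f => univ.filter (f · = Fin.last m) = S) (a : α) :
      f a = Fin.last m ↔ a ∈ S := by
    rw [← (mem_filter.mp hf).2]; simp
  refine sum_bij' (fun f hf p => (f p).castPred (mt (last_iff hf p).1 (mem_compl.mp p.2)))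
    (fun g _ a => if h : a ∈ S then Fin.last m else (g ⟨a, mem_compl.mpr h⟩).castSucc)
    (fun _ _ => mem_univ _) (fun g _ => ?_) (fun f hf => ?_) (fun g _ => ?_) (fun f hf => ?_)
  · simp only [mem_filter, mem_univ, true_and]
    ext a
    by_cases h : a ∈ S <;> simp [h, (Fin.castSucc_lt_last _).ne]
  · funext a
    by_cases h : a ∈ S
    · simp [h, (last_iff hf a).2 h]
    · simp [h]
  · funext p
    simp [mem_compl.mp p.2]
  · refine prod_congr rfl fun j _ => congrArg y ?_
    refine (card_bij (fun p _ => p.1) (fun p hp => ?_) (fun _ _ _ _ => Subtype.ext)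
      (fun a ha => ?_)).symm
    · simp only [mem_filter, mem_univ, true_and] at hp ⊢
      rw [← hp, Fin.castSucc_castPred]
    · have ha : f a = j.castSucc := (mem_filter.mp ha).2
      have haS : a ∉ S := fun h => (Fin.castSucc_lt_last j).ne (ha ▸ (last_iff hf a).2 h)
      exact ⟨⟨a, mem_compl.mpr haS⟩, by simp [ha]⟩

lemma fiberSum_succ (m : ℕ) :
    fiberSum y α (m + 1) = ∑ S : Finset α, y #S * fiberSum y (↥Sᶜ) m := by
  rw [fiberSum, ← sum_fiberwise_of_maps_to
    (g := fun f : α → Fin (m + 1) => univ.filter (f · = Fin.last m))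
    (t := univ) (fun _ _ => mem_univ _)]
  refine sum_congr rfl fun S _ => ?_
  rw [← sum_prod_fiber_castSucc_eq_fiberSum, mul_sum]
  refine sum_congr rfl fun f hf => ?_
  rw [Fin.prod_univ_castSucc, (mem_filter.mp hf).2, mul_comm]

theorem fiberSum_eq_factorial_mul_coeff_pow (u : ℕ → R) (m : ℕ) (α : Type*) [Fintype α]
    [DecidableEq α] :
    fiberSum (fun t => u t * t !) α m
      = (Fintype.card α)! * PowerSeries.coeff (Fintype.card α) (PowerSeries.mk u ^ m) := by
  induction m generalizing α with
  | zero =>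
    rw [fiberSum, pow_zero, PowerSeries.coeff_one]
    rcases isEmpty_or_nonempty α with h | h
    · simp
    · simp [Fintype.card_ne_zero]
  | succ m ih =>
    set n := Fintype.card α
    have hterm (s : ℕ) (hs : s ∈ range (n + 1)) :
        n.choose s • (u s * s ! * ((n - s)! * PowerSeries.coeff (n - s) (PowerSeries.mk u ^ m)))
          = n ! * (PowerSeries.coeff s (PowerSeries.mk u) *
              PowerSeries.coeff (n - s) (PowerSeries.mk u ^ m)) := by
      rw [← Nat.choose_mul_factorial_mul_factorial (Nat.lt_succ_iff.mp (mem_range.mp hs)),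
        PowerSeries.coeff_mk, nsmul_eq_mul]
      push_cast
      ring
    calc fiberSum (fun t => u t * t !) α (m + 1)
        = ∑ S ∈ (univ : Finset α).powerset,
            u #S * (#S)! * ((n - #S)! * PowerSeries.coeff (n - #S) (PowerSeries.mk u ^ m)) := by
          simp only [fiberSum_succ, ih, Fintype.card_coe, card_compl, powerset_univ]; rfl
      _ = n ! * PowerSeries.coeff n (PowerSeries.mk u ^ (m + 1)) := by
          rw [sum_powerset_apply_card
              (fun s => u s * s ! * ((n - s)! * PowerSeries.coeff (n - s) (PowerSeries.mk u ^ m))),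
            card_univ, sum_congr rfl hterm, ← mul_sum, pow_succ',
            PowerSeries.coeff_mul, Nat.sum_antidiagonal_eq_sum_range_succ_mk]

end FiberSum

section SetPartition

variable {n : ℕ}

def kernelPartition {β : Type*} [DecidableEq β] (f : Fin n → β) : Finset (Finset (Fin n)) :=
  univ.image fun i => ({j | f j = f i} : Finset (Fin n))

lemma eq_filter_of_mem_kernelPartition {β : Type*} [DecidableEq β] {f : Fin n → β}
    {B : Finset (Fin n)} (hB : B ∈ kernelPartition f) {a : Fin n} (ha : a ∈ B) :
    B = univ.filter (f · = f a) := by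
  obtain ⟨i, -, rfl⟩ := mem_image.mp hB
  simp only [mem_filter, mem_univ, true_and] at ha
  rw [ha]

lemma isSetPartition_kernelPartition {β : Type*} [DecidableEq β] (f : Fin n → β) :
    IsSetPartition (kernelPartition f) := by
  refine ⟨fun B hB => ?_, fun B hB C hC hBC => ?_,
    fun a => ⟨_, mem_image_of_mem _ (mem_univ a), by simp⟩⟩
  · obtain ⟨i, -, rfl⟩ := mem_image.mp hB
    exact ⟨i, by simp⟩
  · refine disjoint_left.mpr fun a haB haC => hBC ?_
    rw [eq_filter_of_mem_kernelPartition hB haB, eq_filter_of_mem_kernelPartition hC haC]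

namespace IsSetPartition

variable {P : Finset (Finset (Fin n))}

lemma eq_of_mem_of_mem (hP : IsSetPartition P) {B C : Finset (Fin n)} (hB : B ∈ P)
    (hC : C ∈ P) {a : Fin n} (haB : a ∈ B) (haC : a ∈ C) : B = C :=
  by_contra fun hBC => disjoint_left.mp (hP.2.1 B hB C hC hBC) haB haC

noncomputable def block (hP : IsSetPartition P) (a : Fin n) : P :=
  ⟨(hP.2.2 a).choose, (hP.2.2 a).choose_spec.1⟩

lemma mem_block (hP : IsSetPartition P) (a : Fin n) : a ∈ (hP.block a : Finset (Fin n)) :=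
  (hP.2.2 a).choose_spec.2

lemma block_eq_of_mem (hP : IsSetPartition P) {B : Finset (Fin n)} (hB : B ∈ P) {a : Fin n}
    (ha : a ∈ B) : hP.block a = ⟨B, hB⟩ :=
  Subtype.ext (hP.eq_of_mem_of_mem (hP.block a).2 hB (hP.mem_block a) ha)

lemma block_surjective (hP : IsSetPartition P) : Function.Surjective hP.block := fun B =>
  let ⟨a, ha⟩ := hP.1 B B.2
  ⟨a, hP.block_eq_of_mem B.2 ha⟩

lemma card_mem_Icc (hP : IsSetPartition P) (hn : 1 ≤ n) : #P ∈ Icc 1 n := by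
  have hcover : P.biUnion id = univ := eq_univ_of_forall fun a => by
    simpa using hP.2.2 a
  have hle : #P ≤ #(P.biUnion id) :=
    card_le_card_biUnion (fun B hB C hC => hP.2.1 B hB C hC) hP.1
  rw [hcover, card_univ, Fintype.card_fin] at hle
  obtain ⟨B, hB, -⟩ := hP.2.2 ⟨0, hn⟩
  exact mem_Icc.mpr ⟨card_pos.mpr ⟨B, hB⟩, hle⟩

end IsSetPartition

lemma kernelPartition_comp_block {β : Type*} [DecidableEq β] {P : Finset (Finset (Fin n))}
    (hP : IsSetPartition P) {e : P → β} (he : Function.Injective e) :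
    kernelPartition (e ∘ hP.block) = P := by
  have hfiber (i : Fin n) : univ.filter (fun j => e (hP.block j) = e (hP.block i))
      = (hP.block i : Finset (Fin n)) := by
    ext j
    simp only [mem_filter, mem_univ, true_and, he.eq_iff]
    exact ⟨fun h => h ▸ hP.mem_block j, fun h => hP.block_eq_of_mem (hP.block i).2 h⟩
  ext B
  simp only [kernelPartition, Function.comp_apply, hfiber, mem_image, mem_univ, true_and]
  refine ⟨fun ⟨i, hi⟩ => hi ▸ (hP.block i).2, fun hB => ?_⟩
  obtain ⟨i, hi⟩ := hP.block_surjective ⟨B, hB⟩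
  exact ⟨i, congrArg Subtype.val hi⟩

lemma card_filter_kernelPartition_eq {P : Finset (Finset (Fin n))} (hP : IsSetPartition P)
    (m : ℕ) : #{f : Fin n → Fin m | kernelPartition f = P} = m.descFactorial #P := by
  rw [← Fintype.card_coe P, ← Fintype.card_fin m, ← Fintype.card_embedding_eq, Fintype.card_fin]
  refine (card_bij (fun (e : P ↪ Fin m) _ => e ∘ hP.block) (fun e _ => ?_) (fun e _ e' _ h => ?_)
    (fun f hf => ?_)).symm.trans card_univ
  · simpa using kernelPartition_comp_block hP e.injective
  · exact DFunLike.ext _ _ (hP.block_surjective.forall.mpr (congrFun h))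
  · have hfP : kernelPartition f = P := (mem_filter.mp hf).2
    choose rep hrep using fun B : P => hP.1 B B.2
    have hfiber (B : P) : (B : Finset (Fin n)) = univ.filter (f · = f (rep B)) :=
      eq_filter_of_mem_kernelPartition (hfP ▸ B.2) (hrep B)
    refine ⟨⟨f ∘ rep, fun B C h => Subtype.ext ?_⟩, mem_univ _, funext fun a => ?_⟩
    · rw [hfiber B, hfiber C, show f (rep B) = f (rep C) from h]
    · have ha : a ∈ univ.filter (f · = f (rep (hP.block a))) := hfiber _ ▸ hP.mem_block a
      exact ((mem_filter.mp ha).2).symm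

end SetPartition

lemma prod_card_fiber_eq_prod_kernelPartition {R β : Type*} [CommMonoid R] [Fintype β]
    [DecidableEq β] {n : ℕ} (y : ℕ → R) (hy : y 0 = 1) (f : Fin n → β) :
    ∏ j, y #{i | f i = j} = ∏ B ∈ kernelPartition f, y #B := by
  have himage : kernelPartition f = (univ.image f).image fun j => univ.filter (f · = j) := by
    rw [image_image]; rfl
  have hinj : Set.InjOn (fun j => univ.filter (f · = j)) (univ.image f) := by
    intro j hj j' _ h
    obtain ⟨a, -, rfl⟩ := mem_image.mp hj
    have ha : a ∈ univ.filter (f · = j') := by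
      simp only at h; rw [← h]; simp
    exact (mem_filter.mp ha).2
  rw [himage, prod_image hinj]
  refine (prod_subset (subset_univ _) fun j _ hj => ?_).symm
  rw [filter_false_of_mem fun a _ => ?_, card_empty, hy]
  exact fun h => hj (h ▸ mem_image_of_mem f (mem_univ a))

open Classical in
theorem fiberSum_eq_sum_isSetPartition {R : Type*} [CommSemiring R] (y : ℕ → R) (hy : y 0 = 1)
    (n m : ℕ) :
    fiberSum y (Fin n) m
      = ∑ P : Finset (Finset (Fin n)) with IsSetPartition P,
          m.descFactorial #P * ∏ B ∈ P, y #B := by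
  rw [fiberSum, ← sum_fiberwise_of_maps_to (g := kernelPartition)
    fun f _ => mem_filter.mpr ⟨mem_univ _, isSetPartition_kernelPartition f⟩]
  refine sum_congr rfl fun P hP => ?_
  rw [sum_congr rfl fun f hf =>
      (mem_filter.mp hf).2 ▸ prod_card_fiber_eq_prod_kernelPartition y hy f, sum_const,
    card_filter_kernelPartition_eq (mem_filter.mp hP).2, nsmul_eq_mul]

open Classical in
lemma sum_isSetPartition_eq_sum_partialBell {n : ℕ} (hn : 1 ≤ n) (g x : ℕ → ℚ) :
    ∑ P : Finset (Finset (Fin n)) with IsSetPartition P, g #P * ∏ B ∈ P, x #B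
      = ∑ k ∈ Icc 1 n, g k * partialBell n k x := by
  rw [← sum_fiberwise_of_maps_to (g := card) fun P hP => (mem_filter.mp hP).2.card_mem_Icc hn]
  refine sum_congr rfl fun k _ => ?_
  rw [partialBell, mul_sum, filter_filter]
  refine sum_congr rfl fun P hP => ?_
  simp only [mem_filter] at hP
  rw [hP.2.2]

open Classical in
lemma partialBell_congr {n k : ℕ} {x x' : ℕ → ℚ} (h : ∀ m, 0 < m → x m = x' m) :
    partialBell n k x = partialBell n k x' :=
  sum_congr rfl fun _ hP => prod_congr rfl fun B hB =>
    h _ (card_pos.mpr ((mem_filter.mp hP).2.1.1 B hB))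

lemma Nat.cast_descFactorial_div_factorial {K : Type*} [Field K] [CharZero K] {n k : ℕ}
    (h : k ≤ n) : (n.descFactorial k : K) / n ! = 1 / (n - k)! := by
  rw [div_eq_div_iff (by exact_mod_cast n.factorial_ne_zero)
    (by exact_mod_cast (n - k).factorial_ne_zero), one_mul, mul_comm]
  exact_mod_cast Nat.factorial_mul_descFactorial h

/-- `[xⁿ] (1/(n+1)) (1 + 2x + Σ_{i≥2} (i-1)xⁱ)^{n+1} = Σ_{k=1}^n b_{n,k}/(n-k+1)!`. -/
theorem stmt16 (n : ℕ) (hn : 1 ≤ n) :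
    (1 / ((n : ℚ) + 1)) *
      (PowerSeries.coeff n
        ((PowerSeries.mk fun i : ℕ =>
            if i = 0 then (1 : ℚ) else if i = 1 then 2 else (i : ℚ) - 1) ^ (n + 1)))
    = ∑ k ∈ Finset.Icc 1 n, bnk n k / (Nat.factorial (n - k + 1)) := by
  set u : ℕ → ℚ := fun i => if i = 0 then 1 else if i = 1 then 2 else (i : ℚ) - 1
  have hbnk (k : ℕ) : bnk n k = partialBell n k fun t => u t * t ! :=
    partialBell_congr fun m hm => by simp [u, hm.ne']
  have hcoeff : PowerSeries.coeff n (PowerSeries.mk u ^ (n + 1))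
      = (∑ k ∈ Icc 1 n, (n + 1).descFactorial k * bnk n k) / n ! := by
    have hexp := fiberSum_eq_factorial_mul_coeff_pow u (n + 1) (Fin n)
    rw [Fintype.card_fin, fiberSum_eq_sum_isSetPartition _ (by simp [u]),
      sum_isSetPartition_eq_sum_partialBell hn (fun k => ((n + 1).descFactorial k : ℚ))
        (fun t => u t * t !)] at hexp
    simp only [hbnk, hexp]
    field_simp
  rw [hcoeff, sum_div, mul_sum]
  refine sum_congr rfl fun k hk => ?_
  have hkn := (mem_Icc.mp hk).2
  have hdesc := Nat.cast_descFactorial_div_factorial (K := ℚ) (n := n + 1) (hkn.trans n.le_succ)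
  rw [Nat.factorial_succ, Nat.sub_add_comm hkn] at hdesc
  push_cast at hdesc
  rw [div_eq_mul_one_div (bnk n k), ← hdesc]
  field_simp
end

section
/- Let w be a permutation of [n], r ∈ [n], and define the shifted anti-exceedance set I_r(w) = { i ∈ [n] : i <_r w^{-1}(i) } with respect to the shifted linear order r <_r r+1 <_r ... <_r n <_r 1 <_r ... <_r r-1 (assume w has no fixed points). Then for all r, I_{r+1}(w) = I_r(w) \ {r} ∪ {w(r)} (indices mod n), and consequently |I_1(w)| = |I_2(w)| = ... = |I_n(w)|. -/
/-!
Compare `i` and `w⁻¹ i` by their cyclic distances `i - r` and `w⁻¹ i - r` from `r`. Moving the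
base point to `r + 1` subtracts one from both distances, which preserves their order unless one
of them was `0` and wraps around to the top. Distance `0` from `r` means `i = r` (which was in
`I_r`, since `w⁻¹ r ≠ r`, and now leaves) or `w⁻¹ i = r`, i.e. `i = w r` (which was not in `I_r`
and now enters). Hence `|I_{r+1}| = |I_r|`, and going once around the cycle gives the equality
of all cardinalities.
-/

/-- The shifted anti-exceedance set `I_r(w) = { i : i <_r w⁻¹(i) }`, where `<_r`
is the linear order on `Fin n` starting at `r` (compared via cyclic distance
from `r`). -/
def shiftedAntiExc {n : ℕ} [NeZero n] (w : Equiv.Perm (Fin n)) (r : Fin n) :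
    Finset (Fin n) :=
  Finset.univ.filter fun i => (i - r) < (w.symm i - r)

namespace Fin

variable {n : ℕ} [NeZero n]

theorem sub_one_lt_sub_one_iff {a b : Fin n} (h : a ≠ b) :
    a - 1 < b - 1 ↔ b = 0 ∨ a ≠ 0 ∧ a < b := by
  obtain ⟨m, rfl⟩ : ∃ m, n = m + 1 := Nat.exists_eq_succ_of_ne_zero (NeZero.ne n)
  have hab : a.val ≠ b.val := Fin.val_ne_of_ne h
  simp only [Fin.lt_def, Fin.coe_sub_one, Fin.ext_iff, Fin.val_zero, ne_eq]
  split_ifs <;> omega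

open Fin.NatCast in
theorem apply_eq_of_apply_add_one_eq {α : Type*} {f : Fin n → α}
    (hf : ∀ r, f (r + 1) = f r) (r r' : Fin n) : f r = f r' := by
  have hshift : ∀ k : ℕ, f (r + (k : Fin n)) = f r := by
    intro k
    induction k with
    | zero => simp
    | succ k ih => rw [Nat.cast_succ, ← add_assoc, hf, ih]
  rw [← hshift (r' - r).val, Fin.cast_val_eq_self, add_sub_cancel]

end Fin

section ShiftedAntiExc

variable {n : ℕ} [NeZero n] (w : Equiv.Perm (Fin n))

theorem mem_shiftedAntiExc {r i : Fin n} : i ∈ shiftedAntiExc w r ↔ i - r < w.symm i - r := by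
  simp [shiftedAntiExc]

theorem self_mem_shiftedAntiExc {r : Fin n} (hr : w.symm r ≠ r) : r ∈ shiftedAntiExc w r := by
  rw [mem_shiftedAntiExc, sub_self, Fin.pos_iff_ne_zero, ne_eq, sub_eq_zero]
  exact hr

theorem apply_notMem_shiftedAntiExc (r : Fin n) : w r ∉ shiftedAntiExc w r := by
  simp [mem_shiftedAntiExc]

variable {w}

theorem shiftedAntiExc_add_one (hw : ∀ i, w.symm i ≠ i) (r : Fin n) :
    shiftedAntiExc w (r + 1) = insert (w r) ((shiftedAntiExc w r).erase r) := by
  ext i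
  have hne : i - r ≠ w.symm i - r := fun h => hw i (sub_left_inj.mp h).symm
  rw [Finset.mem_insert, Finset.mem_erase, mem_shiftedAntiExc, mem_shiftedAntiExc,
    sub_add_eq_sub_sub, sub_add_eq_sub_sub, Fin.sub_one_lt_sub_one_iff hne, sub_eq_zero,
    ne_eq, sub_eq_zero, w.symm_apply_eq]

theorem card_shiftedAntiExc_add_one (hw : ∀ i, w.symm i ≠ i) (r : Fin n) :
    (shiftedAntiExc w (r + 1)).card = (shiftedAntiExc w r).card := by
  have hr := self_mem_shiftedAntiExc w (hw r)
  rw [shiftedAntiExc_add_one hw, Finset.card_insert_of_notMem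
      fun h => apply_notMem_shiftedAntiExc w r (Finset.mem_of_mem_erase h),
    Finset.card_erase_add_one hr]

end ShiftedAntiExc

/-- For a fixed-point-free permutation `w`, passing from `<_r` to `<_{r+1}`
removes `r` from the shifted anti-exceedance set and inserts `w r`;
consequently all shifted anti-exceedance sets have the same cardinality. -/
theorem stmt17 {n : ℕ} [NeZero n] (w : Equiv.Perm (Fin n)) (hw : ∀ i, w i ≠ i) :
    (∀ r : Fin n,
      shiftedAntiExc w (r + 1) = insert (w r) ((shiftedAntiExc w r).erase r)) ∧
    (∀ r r' : Fin n, (shiftedAntiExc w r).card = (shiftedAntiExc w r').card) := by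
  have hw' : ∀ i, w.symm i ≠ i := fun i h => hw i (w.symm_apply_eq.mp h).symm
  exact ⟨shiftedAntiExc_add_one hw',
    Fin.apply_eq_of_apply_add_one_eq (card_shiftedAntiExc_add_one hw')⟩
end
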